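/- arXiv:2307.13479 — 4 statements merged into one kernel-verified Lean document; each statement's English description precedes it below -/
import Mathlib

section
/- Let R = ⊕_{n≥0} R_n be a one-dimensional Noetherian ℤ-graded integral domain with R_0 = k a field, such that R_n ≠ 0 and R_{n+1} ≠ 0 for some n ≥ 0. Then the integral closure of R in its field of fractions equals K[t], where K[t,t⁻¹] is the homogeneous localization of R and t is a homogeneous element of degree 1. -/
set_option linter.unusedSectionVars false
set_option linter.unusedVariables false
set_option maxHeartbeats 1600000
set_option synthInstance.maxHeartbeats 1000000

/-- The homogeneous localization `S⁻¹R` of a graded domain `R`, viewed inside the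
fraction field: elements `r/s` with `s ≠ 0` homogeneous. -/
def homogLoc (R : Type) [CommRing R] [IsDomain R] (𝒜 : ℤ → AddSubgroup R) :
    Set (FractionRing R) :=
  {x | ∃ (r s : R) (n : ℤ), s ∈ 𝒜 n ∧ s ≠ 0 ∧
    x = algebraMap R (FractionRing R) r / algebraMap R (FractionRing R) s}

/-- The degree-zero part `K = [S⁻¹R]₀` of the homogeneous localization. -/
def degZeroLoc (R : Type) [CommRing R] [IsDomain R] (𝒜 : ℤ → AddSubgroup R) :
    Set (FractionRing R) :=
  {x | ∃ (n : ℤ) (a s : R), a ∈ 𝒜 n ∧ s ∈ 𝒜 n ∧ s ≠ 0 ∧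
    x = algebraMap R (FractionRing R) a / algebraMap R (FractionRing R) s}

namespace IntClosAux

variable {R : Type} [CommRing R] [IsDomain R]

noncomputable abbrev φ (R : Type) [CommRing R] [IsDomain R] : R →+* FractionRing R :=
  algebraMap R (FractionRing R)

lemma phi_inj : Function.Injective (φ R) := IsFractionRing.injective R (FractionRing R)

lemma phi_ne_zero {x : R} (hx : x ≠ 0) : φ R x ≠ 0 := fun h => hx (phi_inj (by simpa using h))

variable (𝒜 : ℤ → AddSubgroup R) [GradedRing 𝒜]


/-- components of degree < 0 vanish -/
lemma decompose_neg_eq_zero (hneg : ∀ n : ℤ, n < 0 → 𝒜 n = ⊥) {d : ℤ} (hd : d < 0) (x : R) :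
    (DirectSum.decompose 𝒜 x d : R) = 0 := by
  have h : ∀ w : R, w ∈ 𝒜 d → w = 0 := fun w hw => by
    rw [hneg d hd] at hw; exact AddSubgroup.mem_bot.mp hw
  exact h _ (SetLike.coe_mem _)

/-- A finite sum of homogeneous elements of pairwise distinct degrees can vanish
only if each term vanishes. -/
lemma sum_homog_eq_zero {F : Finset ℕ} {g : ℕ → R} {δ : ℕ → ℤ}
    (hinj : ∀ i ∈ F, ∀ j ∈ F, δ i = δ j → i = j)
    (hmem : ∀ i ∈ F, g i ∈ 𝒜 (δ i)) (hsum : ∑ i ∈ F, g i = 0) :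
    ∀ i ∈ F, g i = 0 := by
  intro i hi
  have h0 : (DirectSum.decompose 𝒜 (∑ j ∈ F, g j) (δ i) : R) = 0 := by
    rw [hsum]; simp
  rw [DirectSum.decompose_sum] at h0
  rw [DFinsupp.finset_sum_apply] at h0
  rw [AddSubmonoidClass.coe_finset_sum] at h0
  rw [Finset.sum_eq_single_of_mem i hi] at h0
  · rwa [DirectSum.decompose_of_mem_same 𝒜 (hmem i hi)] at h0
  · intro j hj hne
    exact DirectSum.decompose_of_mem_ne 𝒜 (hmem j hj) (fun h => hne (hinj j hj i hi h))

/-- Key independence lemma: a vanishing sum of homogeneous fractions of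
pairwise distinct (virtual) degrees has vanishing numerators. -/
lemma sum_frac_eq_zero {F : Finset ℕ} {A S : ℕ → R} {dg e : ℕ → ℤ}
    (hinj : ∀ i ∈ F, ∀ j ∈ F, e i = e j → i = j)
    (hA : ∀ i ∈ F, A i ∈ 𝒜 (dg i + e i)) (hS : ∀ i ∈ F, S i ∈ 𝒜 (dg i))
    (hS0 : ∀ i ∈ F, S i ≠ 0)
    (hsum : ∑ i ∈ F, φ R (A i) / φ R (S i) = 0) :
    ∀ i ∈ F, A i = 0 := by
  classical
  set g : ℕ → R := fun i => A i * ∏ j ∈ F.erase i, S j with hg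
  have hgmem : ∀ i ∈ F, g i ∈ 𝒜 ((∑ j ∈ F, dg j) + e i) := by
    intro i hi
    have hprod : (∏ j ∈ F.erase i, S j) ∈ 𝒜 (∑ j ∈ F.erase i, dg j) :=
      SetLike.prod_mem_graded 𝒜 dg S (fun j hj => hS j (Finset.mem_of_mem_erase hj))
    have := SetLike.mul_mem_graded (hA i hi) hprod
    have hdeg : dg i + e i + ∑ j ∈ F.erase i, dg j = (∑ j ∈ F, dg j) + e i := by
      rw [← Finset.add_sum_erase _ _ hi]; ring
    rwa [hdeg] at this
  have hgsum : ∑ i ∈ F, g i = 0 := by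
    apply phi_inj
    rw [map_sum, map_zero]
    have : ∀ i ∈ F, φ R (g i) = (φ R (A i) / φ R (S i)) * ∏ j ∈ F, φ R (S j) := by
      intro i hi
      rw [hg]
      simp only [map_mul, map_prod]
      rw [← Finset.mul_prod_erase _ _ hi, ← mul_assoc,
        div_mul_cancel₀ _ (phi_ne_zero (hS0 i hi))]
    rw [Finset.sum_congr rfl this, ← Finset.sum_mul, hsum, zero_mul]
  intro i hi
  have := sum_homog_eq_zero 𝒜 (δ := fun i => (∑ j ∈ F, dg j) + e i)
    (fun i hi j hj h => hinj i hi j hj (add_left_cancel h)) hgmem hgsum i hi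
  rw [hg] at this
  rcases mul_eq_zero.mp this with h | h
  · exact h
  · exact absurd h (Finset.prod_ne_zero_iff.mpr (fun j hj => hS0 j (Finset.mem_of_mem_erase hj)))



/-- `K` as a subfield of the fraction field. -/
noncomputable def Ksub : Subfield (FractionRing R) where
  carrier := degZeroLoc R 𝒜
  one_mem' := ⟨0, 1, 1, SetLike.one_mem_graded 𝒜, SetLike.one_mem_graded 𝒜, one_ne_zero, by simp⟩
  zero_mem' := ⟨0, 0, 1, AddSubgroup.zero_mem _, SetLike.one_mem_graded 𝒜, one_ne_zero, by simp⟩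
  mul_mem' := by
    rintro x y ⟨m, α, σ, hα, hσ, hσ0, rfl⟩ ⟨m', β, τ, hβ, hτ, hτ0, rfl⟩
    exact ⟨m + m', α * β, σ * τ, SetLike.mul_mem_graded hα hβ, SetLike.mul_mem_graded hσ hτ,
      mul_ne_zero hσ0 hτ0, by rw [map_mul, map_mul, div_mul_div_comm]⟩
  add_mem' := by
    rintro x y ⟨m, α, σ, hα, hσ, hσ0, rfl⟩ ⟨m', β, τ, hβ, hτ, hτ0, rfl⟩
    refine ⟨m + m', α * τ + β * σ, σ * τ, ?_, SetLike.mul_mem_graded hσ hτ,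
      mul_ne_zero hσ0 hτ0, ?_⟩
    · exact AddSubgroup.add_mem _ (SetLike.mul_mem_graded hα hτ)
        (by rw [add_comm m m']; exact SetLike.mul_mem_graded hβ hσ)
    · rw [div_add_div _ _ (phi_ne_zero hσ0) (phi_ne_zero hτ0), map_add, map_mul, map_mul, map_mul]
      ring_nf
  neg_mem' := by
    rintro x ⟨m, α, σ, hα, hσ, hσ0, rfl⟩
    exact ⟨m, -α, σ, AddSubgroup.neg_mem _ hα, hσ, hσ0, by rw [map_neg, neg_div]⟩
  inv_mem' := by
    rintro x ⟨m, α, σ, hα, hσ, hσ0, rfl⟩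
    by_cases hα0 : α = 0
    · exact ⟨0, 0, 1, AddSubgroup.zero_mem _, SetLike.one_mem_graded 𝒜, one_ne_zero, by
        simp [hα0]⟩
    · exact ⟨m, σ, α, hσ, hα, hα0, by rw [inv_div]⟩

lemma mem_Ksub_of_frac {p : ℤ} {u v : R} (hu : u ∈ 𝒜 p) (hv : v ∈ 𝒜 p) (hv0 : v ≠ 0) :
    φ R u / φ R v ∈ Ksub 𝒜 := ⟨p, u, v, hu, hv, hv0, rfl⟩

lemma mem_Ksub_of_deg_zero {w : R} (hw : w ∈ 𝒜 0) : φ R w ∈ Ksub 𝒜 :=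
  ⟨0, w, 1, hw, SetLike.one_mem_graded 𝒜, one_ne_zero, by simp⟩

section t
variable {𝒜}

/-- pow of homogeneous element, with `ℤ`-degree arithmetic -/
lemma pow_mem' {w : R} {d : ℤ} (hw : w ∈ 𝒜 d) (j : ℕ) : w ^ j ∈ 𝒜 (j * d) := by
  have := SetLike.pow_mem_graded j hw
  rwa [nsmul_eq_mul] at this

/-- Every homogeneous fraction of degree `p - q` is a `K`-multiple of `t ^ (p - q)`. -/
lemma frac_eq_K_mul_t {n : ℤ} {s a : R} (hs : s ∈ 𝒜 n) (ha : a ∈ 𝒜 (n + 1))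
    (hs0 : s ≠ 0) (ha0 : a ≠ 0)
    {p q : ℤ} {u v : R} (hu : u ∈ 𝒜 p) (hv : v ∈ 𝒜 q) (hv0 : v ≠ 0) :
    ∃ c ∈ Ksub 𝒜, φ R u / φ R v = c * (φ R a / φ R s) ^ (p - q) := by
  have hφs := phi_ne_zero (R := R) hs0
  have hφa := phi_ne_zero (R := R) ha0
  have hφv := phi_ne_zero (R := R) hv0
  rcases le_or_gt q p with hle | hlt
  · set d : ℕ := (p - q).toNat with hd
    have hdz : (d : ℤ) = p - q := Int.toNat_of_nonneg (by omega)
    refine ⟨φ R (u * s ^ d) / φ R (v * a ^ d), ?_, ?_⟩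
    · refine mem_Ksub_of_frac 𝒜 (p := p + d * n) ?_ ?_ (mul_ne_zero hv0 (pow_ne_zero _ ha0))
      · exact SetLike.mul_mem_graded hu (pow_mem' hs d)
      · have := SetLike.mul_mem_graded hv (pow_mem' ha d)
        have heq : q + d * (n + 1) = p + d * n := by
          have : (d : ℤ) = p - q := hdz
          ring_nf
          omega
        rwa [heq] at this
    · rw [← hdz, zpow_natCast, div_pow, map_mul, map_mul, map_pow, map_pow]
      field_simp
  · set d : ℕ := (q - p).toNat with hd
    have hdz : (d : ℤ) = q - p := Int.toNat_of_nonneg (by omega)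
    refine ⟨φ R (u * a ^ d) / φ R (v * s ^ d), ?_, ?_⟩
    · refine mem_Ksub_of_frac 𝒜 (p := p + d * (n + 1)) ?_ ?_
        (mul_ne_zero hv0 (pow_ne_zero _ hs0))
      · exact SetLike.mul_mem_graded hu (pow_mem' ha d)
      · have := SetLike.mul_mem_graded hv (pow_mem' hs d)
        have heq : q + d * n = p + d * (n + 1) := by
          have : (d : ℤ) = q - p := hdz
          ring_nf
          omega
        rwa [heq] at this
    · have hpq : p - q = -(d : ℤ) := by omega
      rw [hpq, zpow_neg, zpow_natCast, div_pow, map_mul, map_mul, map_pow, map_pow, inv_div]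
      field_simp

end t

section PSI
variable (tt : FractionRing R)

noncomputable def psiAux (d : ℤ) : 𝒜 d →+ FractionRing R where
  toFun w := φ R (w : R) * tt ^ (-d)
  map_zero' := by simp
  map_add' x y := by
    have h : ((x + y : 𝒜 d) : R) = (x : R) + (y : R) := rfl
    simp only [h, map_add, add_mul]

noncomputable def psi0 : R →+ FractionRing R :=
  (DirectSum.toAddMonoid (psiAux 𝒜 tt)).comp (DirectSum.decomposeAddEquiv 𝒜).toAddMonoidHom

lemma psi0_homog {d : ℤ} {w : R} (hw : w ∈ 𝒜 d) :
    psi0 𝒜 tt w = φ R w * tt ^ (-d) := by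
  have : (DirectSum.decomposeAddEquiv 𝒜) w = DirectSum.of (fun i => 𝒜 i) d ⟨w, hw⟩ :=
    DirectSum.decompose_of_mem 𝒜 hw
  rw [psi0, AddMonoidHom.comp_apply, AddEquiv.coe_toAddMonoidHom, this,
    DirectSum.toAddMonoid_of]
  rfl

lemma psi0_mul (htt : tt ≠ 0) (x y : R) :
    psi0 𝒜 tt (x * y) = psi0 𝒜 tt x * psi0 𝒜 tt y := by
  induction x using DirectSum.Decomposition.inductionOn 𝒜 with
  | zero => simp
  | homogeneous w =>
    induction y using DirectSum.Decomposition.inductionOn 𝒜 with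
    | zero => simp
    | homogeneous w' =>
      rw [psi0_homog 𝒜 tt w.2, psi0_homog 𝒜 tt w'.2,
        psi0_homog 𝒜 tt (SetLike.mul_mem_graded w.2 w'.2), map_mul, neg_add,
        zpow_add₀ htt]
      ring
    | add y₁ y₂ h1 h2 => rw [mul_add, map_add, map_add, h1, h2, mul_add]
  | add x₁ x₂ h1 h2 => rw [add_mul, map_add, map_add, h1, h2, add_mul]

/-- The "evaluation at t = 1" ring homomorphism `R → Frac R`. -/
noncomputable def psi (htt : tt ≠ 0) : R →+* FractionRing R where
  toFun := psi0 𝒜 tt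
  map_one' := by
    rw [psi0_homog 𝒜 tt (SetLike.one_mem_graded 𝒜)]
    simp
  map_mul' := psi0_mul 𝒜 tt htt
  map_zero' := by simp
  map_add' := map_add _

lemma psi_homog (htt : tt ≠ 0) {d : ℤ} {w : R} (hw : w ∈ 𝒜 d) :
    psi 𝒜 tt htt w = φ R w * tt ^ (-d) := psi0_homog 𝒜 tt hw



end PSI


/-- Finite generation of `R` over the degree-zero subring, from Noetherianity. -/
lemma exists_fg (hneg : ∀ n : ℤ, n < 0 → 𝒜 n = ⊥) [IsNoetherianRing R] :
    ∃ T : Finset R, (∀ h ∈ T, h ≠ 0 ∧ ∃ d : ℤ, 0 < d ∧ h ∈ 𝒜 d) ∧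
      ∀ r : R, r ∈ Subring.closure ((𝒜 0 : Set R) ∪ ↑T) := by
  classical
  set Iset : Ideal R := Ideal.span {x | ∃ d : ℤ, 0 < d ∧ x ∈ 𝒜 d} with hIset
  have hIhom : Iset.IsHomogeneous 𝒜 :=
    Ideal.homogeneous_span 𝒜 _ (fun x hx => ⟨hx.choose, hx.choose_spec.2⟩)
  -- all components of elements of Iset in degrees ≤ 0 vanish
  have hI0 : ∀ x ∈ Iset, ∀ d : ℤ, d ≤ 0 → (DirectSum.decompose 𝒜 x d : R) = 0 := by
    intro x hx
    induction hx using Submodule.span_induction with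
    | mem w hw =>
      intro d hd
      obtain ⟨e, he, hwe⟩ := hw
      exact DirectSum.decompose_of_mem_ne 𝒜 hwe (by omega)
    | zero => intro d _; simp
    | add x y hx hy ihx ihy =>
      intro d hd
      rw [DirectSum.decompose_add]
      have : (DirectSum.decompose 𝒜 x d + DirectSum.decompose 𝒜 y d : R) = 0 := by
        rw [ihx d hd, ihy d hd, add_zero]
      simpa using this
    | smul c x hx ihx =>
      intro d hd
      have hcx : c • x = ∑ i ∈ (DirectSum.decompose 𝒜 c).support,
          (DirectSum.decompose 𝒜 c i : R) * x := by
        rw [← Finset.sum_mul, smul_eq_mul]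
        congr 1
        exact (DirectSum.sum_support_decompose 𝒜 c).symm
      rw [hcx, DirectSum.decompose_sum, DFinsupp.finset_sum_apply,
        AddSubmonoidClass.coe_finset_sum]
      apply Finset.sum_eq_zero
      intro i _
      rcases lt_or_ge i 0 with hi | hi
      · have : (DirectSum.decompose 𝒜 c i : R) = 0 := decompose_neg_eq_zero 𝒜 hneg hi c
        rw [this, zero_mul]
        simp
      · have hrw : d = i + (d - i) := by ring
        rw [hrw, DirectSum.coe_decompose_mul_add_of_left_mem 𝒜 (SetLike.coe_mem _),
          ihx (d - i) (by omega), mul_zero]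
  obtain ⟨G, hG⟩ : Iset.FG := IsNoetherian.noetherian Iset
  set T : Finset R := G.biUnion (fun g => (DirectSum.decompose 𝒜 g).support.image
    (fun d => (DirectSum.decompose 𝒜 g d : R))) with hT
  have hTmem : ∀ h ∈ T, ∃ (g : R) (d : ℤ), g ∈ G ∧ d ∈ (DirectSum.decompose 𝒜 g).support ∧
      h = (DirectSum.decompose 𝒜 g d : R) := by
    intro h hh
    obtain ⟨g, hg, hh⟩ := Finset.mem_biUnion.mp hh
    obtain ⟨d, hd, rfl⟩ := Finset.mem_image.mp hh
    exact ⟨g, d, hg, hd, rfl⟩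
  have hGI : ∀ g ∈ G, g ∈ Iset := by
    intro g hg; rw [← hG]; exact Ideal.subset_span hg
  have hTprop : ∀ h ∈ T, h ≠ 0 ∧ ∃ d : ℤ, 0 < d ∧ h ∈ 𝒜 d := by
    intro h hh
    obtain ⟨g, d, hg, hd, rfl⟩ := hTmem h hh
    have hne : (DirectSum.decompose 𝒜 g d : R) ≠ 0 := by
      intro h0
      exact DFinsupp.mem_support_iff.mp hd (Subtype.ext h0)
    refine ⟨hne, d, ?_, SetLike.coe_mem _⟩
    by_contra hdle
    exact hne (hI0 g (hGI g hg) d (by omega))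
  have hTI : ∀ h ∈ T, h ∈ Iset := by
    intro h hh
    obtain ⟨g, d, hg, hd, rfl⟩ := hTmem h hh
    exact hIhom d (hGI g hg)
  have hsub : Iset ≤ Ideal.span (↑T : Set R) := by
    rw [← hG, Ideal.span_le]
    intro g hg
    have : g = ∑ d ∈ (DirectSum.decompose 𝒜 g).support, (DirectSum.decompose 𝒜 g d : R) :=
      (DirectSum.sum_support_decompose 𝒜 g).symm
    rw [this]
    apply Submodule.sum_mem
    intro d hd
    apply Ideal.subset_span
    exact Finset.mem_biUnion.mpr ⟨g, hg, Finset.mem_image.mpr ⟨d, hd, rfl⟩⟩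
  set cl := Subring.closure ((𝒜 0 : Set R) ∪ ↑T) with hcl
  have key : ∀ (N : ℕ) (d : ℤ) (r : R), d ≤ N → r ∈ 𝒜 d → r ∈ cl := by
    intro N
    induction N with
    | zero =>
      intro d r hd hr
      rcases lt_or_eq_of_le hd with hd' | hd'
      · have : r = 0 := by
          have := hr
          rw [hneg d (by exact_mod_cast hd')] at this
          exact AddSubgroup.mem_bot.mp this
        rw [this]; exact Subring.zero_mem _
      · subst hd'
        · exact Subring.subset_closure (Or.inl hr)
    | succ N ih =>
      intro d r hd hr
      rcases le_or_gt d N with hdN | hdN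
      · exact ih d r hdN hr
      · have hd' : d = N + 1 := by omega
        have hdpos : 0 < d := by omega
        by_cases hr0 : r = 0
        · rw [hr0]; exact Subring.zero_mem _
        have hrI : r ∈ Ideal.span (↑T : Set R) := hsub (Ideal.subset_span ⟨d, hdpos, hr⟩)
        obtain ⟨f, -, hf⟩ := Submodule.mem_span_finset.mp hrI
        have hrd : r = (DirectSum.decompose 𝒜 r d : R) :=
          (DirectSum.decompose_of_mem_same 𝒜 hr).symm
        rw [hrd, ← hf, DirectSum.decompose_sum, DFinsupp.finset_sum_apply,
          AddSubmonoidClass.coe_finset_sum]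
        apply Subring.sum_mem
        intro h hh
        obtain ⟨hne, e, hepos, he⟩ := hTprop h hh
        have hrw : d = (d - e) + e := by ring
        rw [smul_eq_mul, hrw, DirectSum.coe_decompose_mul_add_of_right_mem 𝒜 he]
        apply Subring.mul_mem
        · exact ih (d - e) _ (by omega) (SetLike.coe_mem _)
        · exact Subring.subset_closure (Or.inr hh)
  refine ⟨T, hTprop, fun r => ?_⟩
  have : r = ∑ d ∈ (DirectSum.decompose 𝒜 r).support, (DirectSum.decompose 𝒜 r d : R) :=
    (DirectSum.sum_support_decompose 𝒜 r).symm
  rw [this]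
  apply Subring.sum_mem
  intro d _
  exact key d.toNat d _ (Int.self_le_toNat d) (SetLike.coe_mem _)


/-- The degree-zero part of `R` as a subring. -/
def k0 : Subring R where
  carrier := 𝒜 0
  one_mem' := SetLike.one_mem_graded 𝒜
  mul_mem' {x y} hx hy := by simpa using SetLike.mul_mem_graded hx hy
  add_mem' {x y} hx hy := AddSubgroup.add_mem _ hx hy
  zero_mem' := AddSubgroup.zero_mem _
  neg_mem' {x} hx := AddSubgroup.neg_mem _ hx

lemma k0_isField (hfield : ∀ x ∈ 𝒜 0, x ≠ 0 → ∃ y ∈ 𝒜 0, x * y = 1) :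
    IsField (k0 𝒜) := by
  refine ⟨⟨0, 1, ?_⟩, mul_comm, ?_⟩
  · intro h
    exact zero_ne_one (congrArg Subtype.val h)
  · rintro ⟨x, hx⟩ hx0
    have hxne : x ≠ 0 := fun h => hx0 (Subtype.ext h)
    obtain ⟨y, hy, hxy⟩ := hfield x hx hxne
    exact ⟨⟨y, hy⟩, Subtype.ext hxy⟩

open Polynomial

/-- Every element of `K` is integral over `R`. -/
lemma K_integral [IsNoetherianRing R]
    (hneg : ∀ n : ℤ, n < 0 → 𝒜 n = ⊥)
    (hfield : ∀ x ∈ 𝒜 0, x ≠ 0 → ∃ y ∈ 𝒜 0, x * y = 1)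
    (hdim : ringKrullDim R = 1)
    {n : ℤ} {s a : R} (hs : s ∈ 𝒜 n) (ha : a ∈ 𝒜 (n + 1)) (hs0 : s ≠ 0) (ha0 : a ≠ 0)
    {c : FractionRing R} (hc : c ∈ degZeroLoc R 𝒜) :
    IsIntegral R c := by
  classical
  obtain ⟨m, α, σ, hα, hσ, hσ0, rfl⟩ := hc
  have hφs := phi_ne_zero (R := R) hs0
  have hφa := phi_ne_zero (R := R) ha0
  set tt : FractionRing R := φ R a / φ R s with htt_def
  have htt : tt ≠ 0 := div_ne_zero hφa hφs
  set ψ : R →+* FractionRing R := psi 𝒜 tt htt with hψdef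
  have hψhom : ∀ {d : ℤ} {w : R}, w ∈ 𝒜 d → ψ w = φ R w * tt ^ (-d) :=
    fun hw => psi_homog 𝒜 tt htt hw
  set q : Ideal R := RingHom.ker ψ with hqdef
  haveI hqprime : q.IsPrime := RingHom.ker_isPrime ψ
  -- `q` is nonzero
  have hqbot : q ≠ ⊥ := by
    intro hbot
    have has : a - s ∈ q := by
      rw [hqdef, RingHom.mem_ker, map_sub]
      have h1 : ψ a = φ R a * tt ^ (-(n+1)) := hψhom ha
      have h2 : ψ s = φ R s * tt ^ (-n) := hψhom hs
      rw [h1, h2, sub_eq_zero]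
      have key : φ R a * tt⁻¹ = φ R s := by
        rw [htt_def, inv_div, mul_div_assoc', mul_div_cancel_left₀ _ hφa]
      calc φ R a * tt ^ (-(n+1)) = (φ R a * tt⁻¹) * tt ^ (-n) := by
            rw [show (-(n+1) : ℤ) = (-n) + (-1) by ring, zpow_add₀ htt, zpow_neg_one]
            ring
        _ = φ R s * tt ^ (-n) := by rw [key]
    rw [hbot, Ideal.mem_bot, sub_eq_zero] at has
    -- a = s is impossible since they are homogeneous of different degrees
    have : s = 0 := by
      have hmem : s ∈ 𝒜 (n + 1) := has ▸ ha
      have h1 : (DirectSum.decompose 𝒜 s n : R) = s := DirectSum.decompose_of_mem_same 𝒜 hs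
      have h2 : (DirectSum.decompose 𝒜 s n : R) = 0 :=
        DirectSum.decompose_of_mem_ne 𝒜 hmem (by omega)
      rw [h1] at h2; exact h2
    exact hs0 this
  have hqtop : q ≠ ⊤ := by
    intro htop
    have : ψ 1 = 0 := by
      rw [← RingHom.mem_ker, ← hqdef, htop]; trivial
    rw [map_one] at this
    exact one_ne_zero this
  -- `q` is maximal, by the dimension hypothesis
  obtain ⟨M, hM, hqM⟩ := Ideal.exists_le_maximal q hqtop
  have hqeq : q = M := by
    by_contra hne
    have hlt1 : (⊥ : Ideal R) < q := Ne.bot_lt (Ne.symm (Ne.symm hqbot))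
    have hlt2 : q < M := lt_of_le_of_ne hqM hne
    let p0 : PrimeSpectrum R := ⟨⊥, Ideal.bot_prime⟩
    let p1 : PrimeSpectrum R := ⟨q, hqprime⟩
    let p2 : PrimeSpectrum R := ⟨M, hM.isPrime⟩
    let c : LTSeries (PrimeSpectrum R) :=
      ⟨2, ![p0, p1, p2], by
        intro i
        fin_cases i
        · exact hlt1
        · exact hlt2⟩
    have hlen := Order.LTSeries.length_le_krullDim c
    rw [show ringKrullDim R = Order.krullDim (PrimeSpectrum R) from rfl] at hdim
    rw [hdim] at hlen
    norm_num [c] at hlen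
  haveI hqmax : q.IsMaximal := hqeq ▸ hM
  letI : Field (R ⧸ q) := Ideal.Quotient.field q
  letI : Field (k0 𝒜) := (k0_isField 𝒜 hfield).toField
  letI : Algebra (k0 𝒜) (R ⧸ q) :=
    RingHom.toAlgebra ((Ideal.Quotient.mk q).comp (k0 𝒜).subtype)
  obtain ⟨T, hTprop, hTgen⟩ := exists_fg 𝒜 hneg
  haveI : Algebra.FiniteType (k0 𝒜) (R ⧸ q) := by
    refine ⟨⟨T.image (Ideal.Quotient.mk q), ?_⟩⟩
    rw [eq_top_iff]
    rintro x -
    obtain ⟨r, rfl⟩ := Ideal.Quotient.mk_surjective x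
    have hr := hTgen r
    induction hr using Subring.closure_induction with
    | mem w hw =>
      rcases hw with hw | hw
      · have : Ideal.Quotient.mk q w = algebraMap (k0 𝒜) (R ⧸ q) ⟨w, hw⟩ := rfl
        rw [this]
        exact Subalgebra.algebraMap_mem _ _
      · exact Algebra.subset_adjoin (Finset.mem_coe.mpr (Finset.mem_image_of_mem _ hw))
    | one => rw [map_one]; exact Subalgebra.one_mem _
    | zero => rw [map_zero]; exact Subalgebra.zero_mem _
    | add x y _ _ hx hy => rw [map_add]; exact Subalgebra.add_mem _ hx hy
    | mul x y _ _ hx hy => rw [map_mul]; exact Subalgebra.mul_mem _ hx hy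
    | neg x _ hx => rw [map_neg]; exact Subalgebra.neg_mem _ hx
  haveI : Module.Finite (k0 𝒜) (R ⧸ q) :=
    finite_of_finite_type_of_isJacobsonRing (k0 𝒜) (R ⧸ q)
  haveI hInt : Algebra.IsIntegral (k0 𝒜) (R ⧸ q) := @Algebra.IsIntegral.of_finite _ _ _ _ _ ‹Module.Finite (k0 𝒜) (R ⧸ q)›
  -- now produce the integral equation for `c = φ α / φ σ`
  have hψσ : ψ σ ≠ 0 := by
    rw [hψhom hσ]
    exact mul_ne_zero (phi_ne_zero hσ0) (zpow_ne_zero _ htt)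
  have hmkσ : (Ideal.Quotient.mk q σ) ≠ 0 := by
    rw [Ne, Ideal.Quotient.eq_zero_iff_mem]
    intro hmem
    exact hψσ hmem
  obtain ⟨τ, hτ⟩ := Ideal.Quotient.mk_surjective (Ideal.Quotient.mk q σ)⁻¹
  have hστ : ψ (σ * τ) = 1 := by
    have : Ideal.Quotient.mk q (σ * τ) = Ideal.Quotient.mk q 1 := by
      rw [map_mul, hτ, mul_inv_cancel₀ hmkσ, map_one]
    have hsub : σ * τ - 1 ∈ q := Ideal.Quotient.eq.mp this
    have h0 : ψ (σ * τ - 1) = 0 := hsub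
    rw [map_sub, map_one, sub_eq_zero] at h0
    exact h0
  have hc_eq : φ R α / φ R σ = ψ (α * τ) := by
    rw [map_mul]
    have hτeq : ψ τ = (ψ σ)⁻¹ := by
      rw [map_mul] at hστ
      field_simp at hστ ⊢
      linear_combination hστ
    rw [hτeq, hψhom hα, hψhom hσ]
    have h1 : (φ R σ * tt ^ (-m))⁻¹ = (φ R σ)⁻¹ * (tt ^ (-m))⁻¹ := mul_inv _ _
    rw [h1]
    have h2 : tt ^ (-m) * (tt ^ (-m))⁻¹ = 1 := mul_inv_cancel₀ (zpow_ne_zero _ htt)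
    calc φ R α / φ R σ = φ R α * (φ R σ)⁻¹ := div_eq_mul_inv _ _
      _ = (φ R α * (φ R σ)⁻¹) * (tt ^ (-m) * (tt ^ (-m))⁻¹) := by rw [h2, mul_one]
      _ = φ R α * tt ^ (-m) * ((φ R σ)⁻¹ * (tt ^ (-m))⁻¹) := by ring
  rw [hc_eq]
  set x : R ⧸ q := Ideal.Quotient.mk q (α * τ) with hx
  obtain ⟨P, hPmonic, hPeval⟩ := hInt.isIntegral x
  set ψbar : R ⧸ q →+* FractionRing R :=
    Ideal.Quotient.lift q ψ (fun r hr => hr) with hψbar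
  have hbar_mk : ∀ r : R, ψbar (Ideal.Quotient.mk q r) = ψ r := fun r =>
    Ideal.Quotient.lift_mk q _ _
  have h0 : ψbar (Polynomial.eval₂ (algebraMap (k0 𝒜) (R ⧸ q)) x P) = 0 := by
    rw [hPeval, map_zero]
  rw [Polynomial.hom_eval₂] at h0
  have hcomp : ψbar.comp (algebraMap (k0 𝒜) (R ⧸ q)) = (φ R).comp (k0 𝒜).subtype := by
    ext w
    show ψbar (Ideal.Quotient.mk q (w : R)) = φ R (w : R)
    have hw : (w : R) ∈ 𝒜 0 := w.2
    rw [hbar_mk, hψhom hw]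
    simp
  rw [hcomp, hbar_mk] at h0
  refine ⟨P.map (k0 𝒜).subtype, hPmonic.map _, ?_⟩
  rw [Polynomial.eval₂_map]
  exact h0


open Polynomial in
lemma term_mem_homogLoc {n : ℤ} {s a : R} (hs : s ∈ 𝒜 n) (ha : a ∈ 𝒜 (n + 1))
    (hs0 : s ≠ 0) (ha0 : a ≠ 0) {c : FractionRing R} (hc : c ∈ Ksub 𝒜) (i : ℤ) :
    c * (φ R a / φ R s) ^ i ∈ homogLoc R 𝒜 := by
  obtain ⟨m, α, σ, hα, hσ, hσ0, rfl⟩ := hc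
  rcases le_or_gt 0 i with hi | hi
  · set j : ℕ := i.toNat with hj
    have hji : (j : ℤ) = i := Int.toNat_of_nonneg hi
    refine ⟨α * a ^ j, σ * s ^ j, m + j * n,
      SetLike.mul_mem_graded hσ (pow_mem' hs j), mul_ne_zero hσ0 (pow_ne_zero _ hs0), ?_⟩
    rw [← hji, zpow_natCast, div_pow, div_mul_div_comm, map_mul, map_mul, map_pow, map_pow]
  · set j : ℕ := (-i).toNat with hj
    have hji : (j : ℤ) = -i := Int.toNat_of_nonneg (by omega)
    refine ⟨α * s ^ j, σ * a ^ j, m + j * (n + 1),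
      SetLike.mul_mem_graded hσ (pow_mem' ha j), mul_ne_zero hσ0 (pow_ne_zero _ ha0), ?_⟩
    rw [show i = -(j : ℤ) by omega, zpow_neg, zpow_natCast, div_pow, inv_div,
      div_mul_div_comm, map_mul, map_mul, map_pow, map_pow]

lemma zero_mem_homogLoc : (0 : FractionRing R) ∈ homogLoc R 𝒜 :=
  ⟨0, 1, 0, SetLike.one_mem_graded 𝒜, one_ne_zero, by simp⟩

lemma add_mem_homogLoc {x y : FractionRing R} (hx : x ∈ homogLoc R 𝒜)
    (hy : y ∈ homogLoc R 𝒜) : x + y ∈ homogLoc R 𝒜 := by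
  obtain ⟨r₁, s₁, q₁, hs₁, hs₁0, rfl⟩ := hx
  obtain ⟨r₂, s₂, q₂, hs₂, hs₂0, rfl⟩ := hy
  refine ⟨r₁ * s₂ + r₂ * s₁, s₁ * s₂, q₁ + q₂, SetLike.mul_mem_graded hs₁ hs₂,
    mul_ne_zero hs₁0 hs₂0, ?_⟩
  rw [div_add_div _ _ (phi_ne_zero hs₁0) (phi_ne_zero hs₂0), map_add, map_mul, map_mul, map_mul]
  ring_nf

lemma homogLoc_iff {n : ℤ} {s a : R} (hs : s ∈ 𝒜 n) (ha : a ∈ 𝒜 (n + 1))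
    (hs0 : s ≠ 0) (ha0 : a ≠ 0) (x : FractionRing R) :
    x ∈ homogLoc R 𝒜 ↔ ∃ (F : Finset ℤ) (c : ℤ → FractionRing R),
      (∀ i ∈ F, c i ∈ Ksub 𝒜) ∧ x = ∑ i ∈ F, c i * (φ R a / φ R s) ^ i := by
  classical
  have htt : (φ R a / φ R s) ≠ 0 := div_ne_zero (phi_ne_zero ha0) (phi_ne_zero hs0)
  set tt := φ R a / φ R s with htt_def
  constructor
  · rintro ⟨r, s₀, q₀, hs₀, hs₀0, rfl⟩
    refine ⟨(DirectSum.decompose 𝒜 r).support.image (fun d => d - q₀),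
      fun i => (φ R (DirectSum.decompose 𝒜 r (i + q₀)) / φ R s₀) * tt ^ (-i), ?_, ?_⟩
    · intro i hi
      dsimp only
      obtain ⟨c', hc', heq⟩ := frac_eq_K_mul_t hs ha hs0 ha0
        (SetLike.coe_mem (DirectSum.decompose 𝒜 r (i + q₀))) hs₀ hs₀0
      rw [show (i + q₀ - q₀ : ℤ) = i by ring, ← htt_def] at heq
      rw [heq, mul_assoc, ← zpow_add₀ htt, add_neg_cancel, zpow_zero, mul_one]
      exact hc'
    · rw [Finset.sum_image (fun x _ y _ h => by omega)]
      have hterm : ∀ d ∈ (DirectSum.decompose 𝒜 r).support,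
          (φ R (DirectSum.decompose 𝒜 r (d - q₀ + q₀)) / φ R s₀) * tt ^ (-(d - q₀)) *
            tt ^ (d - q₀) = φ R (DirectSum.decompose 𝒜 r d) / φ R s₀ := by
        intro d _
        rw [show (d - q₀ + q₀ : ℤ) = d by ring, mul_assoc, ← zpow_add₀ htt,
          neg_add_cancel, zpow_zero, mul_one]
      rw [Finset.sum_congr rfl hterm, ← Finset.sum_div, ← map_sum,
        DirectSum.sum_support_decompose 𝒜 r]
  · rintro ⟨F, c, hc, rfl⟩
    induction F using Finset.induction_on with
    | empty => simpa using zero_mem_homogLoc 𝒜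
    | @insert i F hiF ih =>
      rw [Finset.sum_insert hiF]
      exact add_mem_homogLoc 𝒜
        (term_mem_homogLoc 𝒜 hs ha hs0 ha0 (hc i (Finset.mem_insert_self i F)) i)
        (ih (fun j hj => hc j (Finset.mem_insert_of_mem hj)))

open Polynomial

lemma algebraMap_Ksub (y : Ksub 𝒜) :
    algebraMap (Ksub 𝒜) (FractionRing R) y = (y : FractionRing R) := rfl

lemma exists_poly (hneg : ∀ n : ℤ, n < 0 → 𝒜 n = ⊥)
    {n : ℤ} {s a : R} (hs : s ∈ 𝒜 n) (ha : a ∈ 𝒜 (n + 1))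
    (hs0 : s ≠ 0) (ha0 : a ≠ 0) (r : R) :
    ∃ P : Polynomial (Ksub 𝒜), aeval (φ R a / φ R s) P = φ R r := by
  induction r using DirectSum.Decomposition.inductionOn 𝒜 with
  | zero => exact ⟨0, by simp⟩
  | homogeneous w =>
    rename_i d
    rcases lt_or_ge d 0 with hd | hd
    · have h0 : ∀ u : R, u ∈ 𝒜 d → u = 0 := fun u hu => by
        rw [hneg d hd] at hu; exact AddSubgroup.mem_bot.mp hu
      have : (w : R) = 0 := h0 _ w.2
      exact ⟨0, by rw [this]; simp⟩
    · obtain ⟨c', hc', heq⟩ := frac_eq_K_mul_t hs ha hs0 ha0 w.2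
        (SetLike.one_mem_graded 𝒜) (one_ne_zero (α := R))
      rw [map_one, div_one, show (d - 0 : ℤ) = d by ring] at heq
      refine ⟨C ⟨c', hc'⟩ * X ^ d.toNat, ?_⟩
      rw [map_mul, aeval_C, map_pow, aeval_X, algebraMap_Ksub, heq]
      congr 1
      rw [← zpow_natCast, Int.toNat_of_nonneg hd]
  | add x y hx hy =>
    obtain ⟨P₁, h₁⟩ := hx
    obtain ⟨P₂, h₂⟩ := hy
    exact ⟨P₁ + P₂, by rw [map_add, h₁, h₂, map_add]⟩

lemma aeval_tt_injective (hneg : ∀ n : ℤ, n < 0 → 𝒜 n = ⊥)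
    {n : ℤ} {s a : R} (hs : s ∈ 𝒜 n) (ha : a ∈ 𝒜 (n + 1))
    (hs0 : s ≠ 0) (ha0 : a ≠ 0) :
    Function.Injective (aeval (R := Ksub 𝒜) (φ R a / φ R s) : Polynomial (Ksub 𝒜) →ₐ[Ksub 𝒜] FractionRing R) := by
  rw [injective_iff_map_eq_zero]
  intro P hP
  set tt := φ R a / φ R s with htt_def
  have hmem : ∀ i : ℕ, ∃ (m : ℤ) (α σ : R), α ∈ 𝒜 m ∧ σ ∈ 𝒜 m ∧ σ ≠ 0 ∧
      ((P.coeff i : FractionRing R)) = φ R α / φ R σ := fun i => (P.coeff i).2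
  choose m α σ hα hσ hσ0 hcoeff using hmem
  rw [aeval_eq_sum_range] at hP
  have hterm : ∀ i ∈ Finset.range (P.natDegree + 1),
      P.coeff i • tt ^ i = φ R (α i * a ^ i) / φ R (σ i * s ^ i) := by
    intro i _
    rw [Algebra.smul_def, algebraMap_Ksub, hcoeff i, div_pow, ← map_pow, ← map_pow,
      div_mul_div_comm, ← map_mul, ← map_mul]
  rw [Finset.sum_congr rfl hterm] at hP
  have hzero := sum_frac_eq_zero 𝒜 (F := Finset.range (P.natDegree + 1))
    (A := fun i => α i * a ^ i) (S := fun i => σ i * s ^ i)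
    (dg := fun i => m i + i * n) (e := fun i => (i : ℤ))
    (fun i _ j _ h => by simpa using h)
    (fun i _ => by
      have := SetLike.mul_mem_graded (hα i) (pow_mem' ha i)
      rwa [show (m i + i * (n + 1) : ℤ) = m i + i * n + i by ring] at this)
    (fun i _ => SetLike.mul_mem_graded (hσ i) (pow_mem' hs i))
    (fun i _ => mul_ne_zero (hσ0 i) (pow_ne_zero _ hs0)) hP
  ext i
  rcases le_or_gt i P.natDegree with hi | hi
  · have hαi : α i * a ^ i = 0 := hzero i (Finset.mem_range.mpr (by omega))
    have : α i = 0 := by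
      rcases mul_eq_zero.mp hαi with h | h
      · exact h
      · exact absurd h (pow_ne_zero _ ha0)
    have : (P.coeff i : FractionRing R) = 0 := by rw [hcoeff i, this, map_zero, zero_div]
    simpa using this
  · simp [coeff_eq_zero_of_natDegree_lt hi]

lemma t_integral [IsNoetherianRing R]
    (hneg : ∀ n : ℤ, n < 0 → 𝒜 n = ⊥)
    (hfield : ∀ x ∈ 𝒜 0, x ≠ 0 → ∃ y ∈ 𝒜 0, x * y = 1)
    (hdim : ringKrullDim R = 1)
    {n : ℤ} (hn : 0 ≤ n) {s a : R} (hs : s ∈ 𝒜 n) (ha : a ∈ 𝒜 (n + 1))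
    (hs0 : s ≠ 0) (ha0 : a ≠ 0) :
    IsIntegral R (φ R a / φ R s) := by
  set N : ℕ := n.toNat with hN
  have hNn : (N : ℤ) = n := Int.toNat_of_nonneg hn
  have hγ : φ R (a ^ N) / φ R (s ^ (N + 1)) ∈ degZeroLoc R 𝒜 := by
    refine ⟨N * (n + 1), a ^ N, s ^ (N + 1), pow_mem' ha N, ?_, pow_ne_zero _ hs0, rfl⟩
    have := pow_mem' hs (N + 1)
    rwa [show ((N + 1 : ℕ) : ℤ) * n = (N : ℤ) * (n + 1) by push_cast; rw [hNn]; ring] at this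
  have hγint : IsIntegral R (φ R (a ^ N) / φ R (s ^ (N + 1))) :=
    K_integral 𝒜 hneg hfield hdim hs ha hs0 ha0 hγ
  have hpow : (φ R a / φ R s) ^ (N + 1) = φ R a * (φ R (a ^ N) / φ R (s ^ (N + 1))) := by
    rw [div_pow, map_pow, map_pow, pow_succ, mul_comm ((φ R a) ^ N), mul_div_assoc]
  have hint : IsIntegral R ((φ R a / φ R s) ^ (N + 1)) := by
    rw [hpow]
    exact (isIntegral_algebraMap (x := a)).mul hγint
  exact IsIntegral.of_pow (Nat.succ_pos N) hint

/-- The integral closure of `R` equals `K[t]`. -/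
lemma closure_eq [IsNoetherianRing R]
    (hneg : ∀ n : ℤ, n < 0 → 𝒜 n = ⊥)
    (hfield : ∀ x ∈ 𝒜 0, x ≠ 0 → ∃ y ∈ 𝒜 0, x * y = 1)
    (hdim : ringKrullDim R = 1)
    {n : ℤ} (hn : 0 ≤ n) {s a : R} (hs : s ∈ 𝒜 n) (ha : a ∈ 𝒜 (n + 1))
    (hs0 : s ≠ 0) (ha0 : a ≠ 0) :
    (integralClosure R (FractionRing R) : Set (FractionRing R)) =
      {x | ∃ (F : Finset ℕ) (c : ℕ → FractionRing R),
        (∀ i ∈ F, c i ∈ Ksub 𝒜) ∧ x = ∑ i ∈ F, c i * (φ R a / φ R s) ^ i} := by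
  classical
  set tt := φ R a / φ R s with htt_def
  ext x
  constructor
  · intro hx
    have hx' : IsIntegral R x := hx
    letI : Algebra (Polynomial (Ksub 𝒜)) (FractionRing R) :=
      RingHom.toAlgebra (aeval (R := Ksub 𝒜) tt : Polynomial (Ksub 𝒜) →ₐ[Ksub 𝒜] FractionRing R).toRingHom
    have halg : ∀ P : Polynomial (Ksub 𝒜),
        algebraMap (Polynomial (Ksub 𝒜)) (FractionRing R) P = aeval (R := Ksub 𝒜) tt P := fun _ => rfl
    have hinj : Function.Injective (algebraMap (Polynomial (Ksub 𝒜)) (FractionRing R)) :=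
      aeval_tt_injective 𝒜 hneg hs ha hs0 ha0
    haveI hloc : IsLocalization (nonZeroDivisors (Polynomial (Ksub 𝒜))) (FractionRing R) := by
      refine ⟨⟨?_, ?_, ?_⟩⟩
      · intro y
        have hy0 : (y : Polynomial (Ksub 𝒜)) ≠ 0 := nonZeroDivisors.ne_zero y.2
        have : algebraMap (Polynomial (Ksub 𝒜)) (FractionRing R) y ≠ 0 := by
          intro h
          exact hy0 (hinj (by rw [h, map_zero]))
        exact isUnit_iff_ne_zero.mpr this
      · intro z
        obtain ⟨u, v, hv, hz⟩ := IsFractionRing.div_surjective (A := R) z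
        have hv0 : v ≠ 0 := nonZeroDivisors.ne_zero hv
        obtain ⟨P, hP⟩ := exists_poly 𝒜 hneg hs ha hs0 ha0 u
        obtain ⟨Q, hQ⟩ := exists_poly 𝒜 hneg hs ha hs0 ha0 v
        have hQ0 : Q ≠ 0 := by
          intro h
          rw [h, map_zero] at hQ
          exact phi_ne_zero hv0 hQ.symm
        refine ⟨⟨P, ⟨Q, mem_nonZeroDivisors_of_ne_zero hQ0⟩⟩, ?_⟩
        rw [halg, halg, hP, hQ, ← hz]
        rw [div_mul_cancel₀ _ (phi_ne_zero hv0)]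
      · intro p q h
        exact ⟨1, by rw [hinj h]⟩
    haveI hfr : IsFractionRing (Polynomial (Ksub 𝒜)) (FractionRing R) := hloc
    -- x is integral over K[X]
    obtain ⟨p, hpmonic, hpeval⟩ := hx'
    have hmap_monic : (p.map (φ R)).Monic := hpmonic.map _
    have heval : (p.map (φ R)).eval x = 0 := by
      rw [eval_map]
      exact hpeval
    have hlift : p.map (φ R) ∈ lifts (algebraMap (Polynomial (Ksub 𝒜)) (FractionRing R)) := by
      rw [lifts_iff_coeff_lifts]
      intro i
      rw [coeff_map]
      obtain ⟨P, hP⟩ := exists_poly 𝒜 hneg hs ha hs0 ha0 (p.coeff i)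
      exact ⟨P, hP⟩
    obtain ⟨q, hq_map, _, hq_monic⟩ := lifts_and_degree_eq_and_monic hlift hmap_monic
    have hxint : IsIntegral (Polynomial (Ksub 𝒜)) x := by
      refine ⟨q, hq_monic, ?_⟩
      rw [← eval_map, hq_map]
      exact heval
    obtain ⟨y, hy⟩ := (isIntegrallyClosed_iff (FractionRing R)).mp inferInstance hxint
    rw [halg] at hy
    refine ⟨Finset.range (y.natDegree + 1), fun i => ((y.coeff i : FractionRing R)), ?_, ?_⟩
    · intro i _
      exact (y.coeff i).2
    · rw [← hy, aeval_eq_sum_range]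
      exact Finset.sum_congr rfl (fun i _ => by rw [Algebra.smul_def, algebraMap_Ksub])
  · rintro ⟨F, c, hc, rfl⟩
    apply Subalgebra.sum_mem
    intro i _
    apply Subalgebra.mul_mem
    · exact K_integral 𝒜 hneg hfield hdim hs ha hs0 ha0 (hc i ‹_›)
    · exact Subalgebra.pow_mem _ (t_integral 𝒜 hneg hfield hdim hn hs ha hs0 ha0) i

end IntClosAux


/-- Let `R = ⊕_{n ≥ 0} Rₙ` be a one-dimensional Noetherian ℤ-graded
domain with `R₀ = k` a field and `Rₙ ≠ 0 ≠ R_{n+1}` for some `n ≥ 0`.  Then the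
integral closure `R̄` of `R` in its fraction field equals `K[t]`, where
`S⁻¹R = K[t, t⁻¹]` is the homogeneous localization, `K` the (sub)field of
degree-zero fractions, and `t` a homogeneous element of degree `1`: that is, `R̄`
consists exactly of the finite `K`-linear combinations of nonnegative powers of `t`. -/
theorem integral_closure_eq_Kt (R : Type) [CommRing R] [IsDomain R]
    [IsNoetherianRing R] (𝒜 : ℤ → AddSubgroup R) [GradedRing 𝒜]
    (hneg : ∀ n : ℤ, n < 0 → 𝒜 n = ⊥)
    (hfield : ∀ x ∈ 𝒜 0, x ≠ 0 → ∃ y ∈ 𝒜 0, x * y = 1)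
    (hcons : ∃ n : ℤ, 0 ≤ n ∧ 𝒜 n ≠ ⊥ ∧ 𝒜 (n + 1) ≠ ⊥)
    (hdim : ringKrullDim R = 1) :
    ∃ (K : Subfield (FractionRing R)) (t : FractionRing R),
      (K : Set (FractionRing R)) = degZeroLoc R 𝒜 ∧
      -- `t` is homogeneous of degree 1
      (∃ (n : ℤ) (a s : R), a ∈ 𝒜 (n + 1) ∧ s ∈ 𝒜 n ∧ s ≠ 0 ∧
        t = algebraMap R (FractionRing R) a / algebraMap R (FractionRing R) s) ∧
      -- `S⁻¹R = K[t, t⁻¹]`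
      (∀ x : FractionRing R, x ∈ homogLoc R 𝒜 ↔
        ∃ (F : Finset ℤ) (c : ℤ → FractionRing R),
          (∀ n ∈ F, c n ∈ K) ∧ x = ∑ n ∈ F, c n * t ^ n) ∧
      -- the integral closure of `R` equals `K[t]`
      ((integralClosure R (FractionRing R) : Set (FractionRing R)) =
        {x | ∃ (F : Finset ℕ) (c : ℕ → FractionRing R),
          (∀ n ∈ F, c n ∈ K) ∧ x = ∑ n ∈ F, c n * t ^ n}) := by
  classical
  obtain ⟨n, hn, hAn, hAn1⟩ := hcons
  have hex : ∀ {d : ℤ}, 𝒜 d ≠ ⊥ → ∃ x ∈ 𝒜 d, x ≠ 0 := by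
    intro d hd
    by_contra h
    push_neg at h
    exact hd ((AddSubgroup.eq_bot_iff_forall _).mpr h)
  obtain ⟨s, hs, hs0⟩ := hex hAn
  obtain ⟨a, ha, ha0⟩ := hex hAn1
  refine ⟨IntClosAux.Ksub 𝒜, IntClosAux.φ R a / IntClosAux.φ R s, rfl,
    ⟨n, a, s, ha, hs, hs0, rfl⟩,
    fun x => IntClosAux.homogLoc_iff 𝒜 hs ha hs0 ha0 x,
    IntClosAux.closure_eq 𝒜 hneg hfield hdim hn hs ha hs0 ha0⟩
end

section
/- Let H be a numerical semigroup minimally generated by a₁,…,a_ℓ with PF(H) = {c₁ < ⋯ < c_r}, r ≥ 2, and suppose k[H] is almost Gorenstein but not Gorenstein. Then for each 2 ≤ i ≤ r and 1 ≤ j ≤ ℓ, the element a_j + c_{i−1} lies in H and, in any representation a_j + c_{i−1} = Σ_k d_k a_k with d_k ∈ ℕ, one has d_j = 0. -/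
open Filter Topology CategoryTheory

/-- The length of an `R`-module `M`, i.e. the length of a longest chain of submodules
(`0` if infinite / undefined). -/
noncomputable def modLength (R M : Type) [CommRing R] [AddCommGroup M] [Module R M] : ℕ :=
  (WithBot.unbotD 0 (Order.krullDim (Submodule R M))).toNat

/-- The minimal number of generators `μ_R(M)` of an `R`-module `M`. -/
noncomputable def mu (R M : Type) [CommRing R] [AddCommGroup M] [Module R M] : ℕ :=
  sInf {n : ℕ | ∃ s : Finset M, s.card = n ∧ Submodule.span R (s : Set M) = ⊤}

/-- The (Krull) dimension of an `R`-module `M`, as a natural number. -/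
noncomputable def modDim (R M : Type) [CommRing R] [AddCommGroup M] [Module R M] : ℕ :=
  ENat.toNat (WithBot.unbotD 0 (ringKrullDim (R ⧸ (⊤ : Submodule R M).annihilator)))

/-- `IsMultiplicity I M e` : the Hilbert–Samuel multiplicity `e⁰_I(M)` of the module `M`
with respect to the ideal `I` equals `e`, i.e.
`length (M / IⁿM) ~ e·n^d/d!` as `n → ∞`, where `d = dim M`. -/
def IsMultiplicity {R : Type} [CommRing R] (I : Ideal R)
    (M : Type) [AddCommGroup M] [Module R M] (e : ℕ) : Prop :=
  Tendsto (fun n : ℕ =>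
      (modLength R (M ⧸ (I ^ n • ⊤ : Submodule R M)) : ℝ) * (modDim R M).factorial / (n : ℝ) ^ (modDim R M))
    atTop (𝓝 (e : ℝ))

/-- `K` is a canonical module of the local ring `(A, m)`: `K` is finitely generated and
`Ext_A^i(A/m, K)` vanishes for `i ≠ dim A` and is isomorphic to the residue field `A/m`
for `i = dim A`. -/
def IsCanonicalModuleAt (A : Type) [CommRing A] (m : Ideal A)
    (K : Type) [AddCommGroup K] [Module A K] : Prop :=
  Module.Finite A K ∧
    (∀ i : ℕ, (i : WithBot (WithTop ℕ)) ≠ ringKrullDim A →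
      Subsingleton (((Ext A (ModuleCat A) i).obj
        (Opposite.op (ModuleCat.of A (A ⧸ m)))).obj (ModuleCat.of A K))) ∧
    (∀ i : ℕ, (i : WithBot (WithTop ℕ)) = ringKrullDim A →
      Nonempty ((((Ext A (ModuleCat A) i).obj
        (Opposite.op (ModuleCat.of A (A ⧸ m)))).obj (ModuleCat.of A K)) ≃ₗ[A] (A ⧸ m)))

/-- `A` is an almost Gorenstein local ring with maximal ideal `m`
(Goto–Takahashi–Taniguchi, Definition 3.3): `A` is local with maximal ideal `m`,
admits a canonical module `K`, and there is an exact sequence `0 → A → K → C → 0`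
with `μ_A(C) = e⁰_m(C)`. -/
def IsAlmostGorensteinLocalAt (A : Type) [CommRing A] (m : Ideal A) : Prop :=
  m.IsMaximal ∧ (∀ x : A, x ∉ m → IsUnit x) ∧
  ∃ (K : Type) (_ : AddCommGroup K) (_ : Module A K), IsCanonicalModuleAt A m K ∧
    ∃ f : A →ₗ[A] K, Function.Injective f ∧
      ∃ e : ℕ, IsMultiplicity m (K ⧸ LinearMap.range f) e ∧
        mu A (K ⧸ LinearMap.range f) = e

/-- `A` is an almost Gorenstein local ring. -/
def IsAlmostGorensteinLocal (A : Type) [CommRing A] : Prop :=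
  ∃ m : Ideal A, IsAlmostGorensteinLocalAt A m

section Graded

variable {R : Type} [CommRing R] (𝒜 : ℤ → AddSubgroup R)

/-- An element is homogeneous (of some degree) with respect to the grading `𝒜`. -/
def IsHomogElem (x : R) : Prop := ∃ n : ℤ, x ∈ 𝒜 n

/-- The graded maximal ideal `M = ⊕_{n ≠ 0} R_n` (when `R₀` is a field). -/
def gradedMaxIdeal : Ideal R :=
  Ideal.span (⋃ n ∈ {n : ℤ | n ≠ 0}, (𝒜 n : Set R))

/-- An ideal is homogeneous: it is generated by its homogeneous elements. -/
def IsHomogIdeal (J : Ideal R) : Prop :=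
  J = Ideal.span {x : R | x ∈ J ∧ IsHomogElem 𝒜 x}

/-- `J` is a graded canonical ideal of `R`: `J` is a nonzero homogeneous ideal whose
localization at the graded maximal ideal `M` is a canonical module of the local ring `R_M`;
equivalently, `J` is isomorphic to a shift `K_R(q)` of the graded canonical module. -/
def IsGradedCanonicalIdeal (J : Ideal R) : Prop :=
  J ≠ ⊥ ∧ J ≠ ⊤ ∧ IsHomogIdeal 𝒜 J ∧
  ∃ hM : (gradedMaxIdeal 𝒜).IsMaximal,
    letI : (gradedMaxIdeal 𝒜).IsPrime := hM.isPrime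
    ∃ m : Ideal (Localization.AtPrime (gradedMaxIdeal 𝒜)),
      (∀ x, x ∉ m → IsUnit x) ∧ m.IsMaximal ∧
      IsCanonicalModuleAt (Localization.AtPrime (gradedMaxIdeal 𝒜)) m
        (LocalizedModule (gradedMaxIdeal 𝒜).primeCompl J)

/-- `R` is an almost Gorenstein graded ring (Goto–Takahashi–Taniguchi, Definition 8.1):
there is a graded canonical ideal `J ≅ K_R(q)` and a homogeneous element `f ∈ J` of
minimal degree `ℓ` (so that `1 ↦ f` gives a degree-preserving injection
`R → J(ℓ) ≅ K_R(-a)`) such that for `C = J/Rf` one has `μ_R(C) = e⁰_M(C)`. -/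
def IsAlmostGorensteinGraded : Prop :=
  ∃ J : Ideal R, IsGradedCanonicalIdeal 𝒜 J ∧
    ∃ (ℓ : ℤ) (f : R) (hfJ : f ∈ J), f ∈ 𝒜 ℓ ∧
      (∀ r : R, r * f = 0 → r = 0) ∧
      (∀ n : ℤ, n < ℓ → ∀ y ∈ J, y ∈ 𝒜 n → y = 0) ∧
      ∃ e : ℕ,
        IsMultiplicity (gradedMaxIdeal 𝒜)
          ((↥J) ⧸ (Submodule.span R {(⟨f, hfJ⟩ : J)})) e ∧
        mu R ((↥J) ⧸ (Submodule.span R {(⟨f, hfJ⟩ : J)})) = e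

end Graded

/-- The numerical semigroup algebra `k[H] = k[tʰ : h ∈ H] ⊆ k[t]`: polynomials whose
support is contained in `H`. -/
def semigroupRing (k : Type) [Field k] (H : AddSubmonoid ℕ) : Subalgebra k (Polynomial k) where
  carrier := {p : Polynomial k | ∀ n : ℕ, n ∉ H → p.coeff n = 0}
  add_mem' := by
    intro p q hp hq n hn
    simp [Polynomial.coeff_add, hp n hn, hq n hn]
  mul_mem' := by
    intro p q hp hq n hn
    rw [Polynomial.coeff_mul]
    refine Finset.sum_eq_zero ?_
    rintro ⟨i, j⟩ hij
    rw [Finset.HasAntidiagonal.mem_antidiagonal] at hij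
    by_cases hi : i ∈ H
    · by_cases hj : j ∈ H
      · exact absurd (hij ▸ H.add_mem hi hj) hn
      · simp [hq j hj]
    · simp [hp i hi]
  algebraMap_mem' := by
    intro a n hn
    have h0 : n ≠ 0 := fun h => hn (h ▸ H.zero_mem)
    simp [Polynomial.coeff_C, h0]

/-- The grading of `k[H]` : the degree-`n` component is spanned by `tⁿ` (for `n ∈ H`). -/
def sgrGrading (k : Type) [Field k] (H : AddSubmonoid ℕ) (n : ℤ) :
    AddSubgroup (semigroupRing k H) where
  carrier := {x | ∃ c : k, (x : Polynomial k) = Polynomial.monomial n.toNat c ∧ (n < 0 → c = 0)}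
  zero_mem' := ⟨0, by simp, fun _ => rfl⟩
  add_mem' := by
    rintro x y ⟨c, hc, hc'⟩ ⟨d, hd, hd'⟩
    exact ⟨c + d, by push_cast [hc, hd]; simp, fun h => by rw [hc' h, hd' h, add_zero]⟩
  neg_mem' := by
    rintro x ⟨c, hc, hc'⟩
    exact ⟨-c, by push_cast [hc]; simp, fun h => by rw [hc' h, neg_zero]⟩

/-- The power series ring `k[[H]] = k[[tʰ : h ∈ H]] ⊆ k[[t]]`: power series whose
support is contained in `H`. -/
def semigroupPowerSeriesRing (k : Type) [Field k] (H : AddSubmonoid ℕ) :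
    Subalgebra k (PowerSeries k) where
  carrier := {p : PowerSeries k | ∀ n : ℕ, n ∉ H → PowerSeries.coeff n p = 0}
  add_mem' := by
    intro p q hp hq n hn
    rw [map_add, hp n hn, hq n hn, add_zero]
  mul_mem' := by
    intro p q hp hq n hn
    rw [PowerSeries.coeff_mul]
    refine Finset.sum_eq_zero ?_
    rintro ⟨i, j⟩ hij
    rw [Finset.HasAntidiagonal.mem_antidiagonal] at hij
    by_cases hi : i ∈ H
    · by_cases hj : j ∈ H
      · exact absurd (hij ▸ H.add_mem hi hj) hn
      · rw [hq j hj, mul_zero]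
    · rw [hp i hi, zero_mul]
  algebraMap_mem' := by
    intro a n hn
    have h0 : n ≠ 0 := fun h => hn (h ▸ H.zero_mem)
    rw [show algebraMap k (PowerSeries k) a = PowerSeries.C a from rfl,
      PowerSeries.coeff_C, if_neg h0]

/-- `H` (as a subset of `ℤ`). -/
def hsetZ (H : AddSubmonoid ℕ) : Set ℤ := {z : ℤ | ∃ h ∈ H, (h : ℤ) = z}

/-- `H` is almost symmetric: for the Frobenius number `f = max(ℤ ∖ H)`, every gap `x`
of `H` satisfies `f - x ∈ H`, or `x` is a pseudo-Frobenius number. -/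
def AlmostSymmetric (H : AddSubmonoid ℕ) : Prop :=
  ∃ f : ℤ, IsGreatest {z : ℤ | z ∉ hsetZ H} f ∧
    ∀ x : ℤ, x ∉ hsetZ H →
      (f - x ∈ hsetZ H ∨ (∀ h ∈ H, h ≠ 0 → x + h ∈ hsetZ H))

/-- A ring `R` with (graded) maximal ideal `M` is Gorenstein at `M`: the localization
`R_M` is its own canonical module. -/
def IsGorensteinAtMax {R : Type} [CommRing R] (M : Ideal R) : Prop :=
  ∃ hM : M.IsMaximal,
    ∃ m : Ideal (Localization (@Ideal.primeCompl R _ M hM.isPrime)),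
      (∀ x, x ∉ m → IsUnit x) ∧ m.IsMaximal ∧
      IsCanonicalModuleAt (Localization (@Ideal.primeCompl R _ M hM.isPrime)) m
        (Localization (@Ideal.primeCompl R _ M hM.isPrime))


/-- if `H = ⟨a₁, …, a_ℓ⟩` is minimally generated, with
`PF(H) = {c₁ < … < c_r}` (indexed here `c 0 < … < c (r-1)`), `r ≥ 2`, and `k[H]` is
almost Gorenstein but not Gorenstein, then for all `2 ≤ i ≤ r` and all `j`:
`a_j + c_{i−1} ∈ H`, and any representation `a_j + c_{i−1} = Σ_t d_t a_t` has
`d_j = 0`. -/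
theorem element_membership_and_support (k : Type) [Field k] (H : AddSubmonoid ℕ)
    (hH : (Set.univ \ (H : Set ℕ)).Finite)
    (r : ℕ) (hr : 2 ≤ r) (c : ℕ → ℕ)
    (hmono : ∀ i j : ℕ, i < j → j < r → c i < c j)
    (hPF : {n : ℕ | n ∉ H ∧ ∀ h ∈ H, h ≠ 0 → n + h ∈ H} = c '' Set.Iio r)
    (hAG : IsAlmostGorensteinGraded (sgrGrading k H))
    (hnG : ¬ IsGorensteinAtMax (gradedMaxIdeal (sgrGrading k H)))
    (ℓ : ℕ) (a : Fin ℓ → ℕ)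
    (hgen : H = AddSubmonoid.closure (Set.range a))
    (hmin : ∀ j : Fin ℓ, a j ∉ AddSubmonoid.closure (Set.range a \ {a j})) :
    ∀ i : ℕ, i < r - 1 → ∀ j : Fin ℓ,
      (a j + c i ∈ H) ∧
      ∀ d : Fin ℓ → ℕ, a j + c i = (∑ t : Fin ℓ, d t * a t) → d j = 0 := by
  intro i hi j
  have hiR : i < r := lt_of_lt_of_le hi (Nat.sub_le r 1)
  have hci : c i ∈ {n : ℕ | n ∉ H ∧ ∀ h ∈ H, h ≠ 0 → n + h ∈ H} := by
    rw [hPF]; exact ⟨i, hiR, rfl⟩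
  obtain ⟨hcnH, hcadd⟩ := hci
  have haH : ∀ t : Fin ℓ, a t ∈ H := fun t => by
    rw [hgen]; exact AddSubmonoid.subset_closure ⟨t, rfl⟩
  have haj0 : a j ≠ 0 := by
    intro h
    exact hmin j (h ▸ AddSubmonoid.zero_mem _)
  refine ⟨by rw [add_comm]; exact hcadd (a j) (haH j) haj0, ?_⟩
  intro d hd
  by_contra hdj
  have hdj1 : 1 ≤ d j := Nat.one_le_iff_ne_zero.mpr hdj
  set e : Fin ℓ → ℕ := fun t => if t = j then d t - 1 else d t with he
  have hsum : (∑ t : Fin ℓ, d t * a t) = (∑ t : Fin ℓ, e t * a t) + a j := by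
    rw [← Finset.sum_erase_add Finset.univ (fun t => d t * a t) (Finset.mem_univ j),
        ← Finset.sum_erase_add Finset.univ (fun t => e t * a t) (Finset.mem_univ j)]
    have h1 : ∀ t ∈ Finset.univ.erase j, e t * a t = d t * a t := by
      intro t ht
      have : t ≠ j := Finset.ne_of_mem_erase ht
      simp [he, this]
    rw [Finset.sum_congr rfl h1]
    have : e j * a j + a j = d j * a j := by
      simp only [he, if_pos rfl]
      rw [← Nat.succ_mul, Nat.succ_eq_add_one, Nat.sub_add_cancel hdj1]
    omega
  have hce : c i = ∑ t : Fin ℓ, e t * a t := by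
    rw [hsum] at hd
    omega
  have : c i ∈ H := by
    rw [hce]
    exact AddSubmonoid.sum_mem H (fun t _ => by
      simpa [smul_eq_mul] using AddSubmonoid.nsmul_mem H (haH t) (e t))
  exact hcnH this
end

section
/- The ideal I = (Z³ − X², XY, YZ) of the polynomial ring k[X,Y,Z] is a radical ideal, and equals both (X,Z) ∩ (Z³ − X², Y) and the ideal I₂ of 2×2 minors of the matrix [Z² X Y; X Z 0]. -/
open MvPolynomial

variable (k : Type) [Field k]

noncomputable def psiA : MvPolynomial (Fin 3) k →ₐ[k] MvPolynomial (Fin 3) k :=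
  aeval ![0, X 1, 0]

lemma sub_psiA_mem (f : MvPolynomial (Fin 3) k) :
    f - psiA k f ∈ Ideal.span {(X 0 : MvPolynomial (Fin 3) k), X 2} := by
  induction f using MvPolynomial.induction_on with
  | C a => simp [psiA]
  | add p q hp hq =>
    have h := Ideal.add_mem _ hp hq
    convert h using 1
    simp only [map_add]; ring
  | mul_X p i hp =>
    fin_cases i
    · show p * X 0 - psiA k (p * X 0) ∈ _
      have : psiA k (p * X 0) = 0 := by simp [psiA]
      rw [this, sub_zero]
      exact Ideal.mul_mem_left _ _ (Ideal.subset_span (by simp))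
    · show p * X 1 - psiA k (p * X 1) ∈ _
      have : psiA k (p * X 1) = psiA k p * X 1 := by simp [psiA]
      rw [this, ← sub_mul]
      exact Ideal.mul_mem_right _ _ hp
    · show p * X 2 - psiA k (p * X 2) ∈ _
      have : psiA k (p * X 2) = 0 := by simp [psiA]
      rw [this, sub_zero]
      exact Ideal.mul_mem_left _ _ (Ideal.subset_span (by simp))

lemma span_le_ker_psiA :
    Ideal.span {(X 0 : MvPolynomial (Fin 3) k), X 2} ≤ RingHom.ker (psiA k).toRingHom := by
  rw [Ideal.span_le]
  rintro d (rfl | rfl) <;> simp [RingHom.mem_ker, psiA]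

lemma mem_J1_iff (f : MvPolynomial (Fin 3) k) :
    f ∈ Ideal.span {(X 0 : MvPolynomial (Fin 3) k), X 2} ↔ psiA k f = 0 := by
  constructor
  · intro h; exact span_le_ker_psiA k h
  · intro h
    have := sub_psiA_mem k f
    rwa [h, sub_zero] at this

variable (k : Type) [Field k]

noncomputable def phiB : MvPolynomial (Fin 3) k →ₐ[k] Polynomial k :=
  aeval ![Polynomial.X ^ 3, 0, Polynomial.X ^ 2]

lemma normal_form (f : MvPolynomial (Fin 3) k) :
    ∃ a b : Polynomial k,
      f - (Polynomial.aeval (X 2 : MvPolynomial (Fin 3) k) a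
          + X 0 * Polynomial.aeval (X 2 : MvPolynomial (Fin 3) k) b)
        ∈ Ideal.span {(X 2 : MvPolynomial (Fin 3) k) ^ 3 - X 0 ^ 2, X 1} := by
  induction f using MvPolynomial.induction_on with
  | C c => exact ⟨Polynomial.C c, 0, by simp⟩
  | add p q hp hq =>
    obtain ⟨a, b, hp⟩ := hp
    obtain ⟨c, d, hq⟩ := hq
    refine ⟨a + c, b + d, ?_⟩
    have h := Ideal.add_mem _ hp hq
    convert h using 1
    simp only [map_add]; ring
  | mul_X p i hp =>
    obtain ⟨a, b, hp⟩ := hp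
    fin_cases i
    · show ∃ a' b', p * X 0 - _ ∈ _
      refine ⟨Polynomial.X ^ 3 * b, a, ?_⟩
      have h2 : ((X 2 : MvPolynomial (Fin 3) k) ^ 3 - X 0 ^ 2) *
          (- Polynomial.aeval (X 2 : MvPolynomial (Fin 3) k) b) ∈
          Ideal.span {(X 2 : MvPolynomial (Fin 3) k) ^ 3 - X 0 ^ 2, X 1} :=
        Ideal.mul_mem_right _ _ (Ideal.subset_span (by simp))
      have h := Ideal.add_mem _ (Ideal.mul_mem_right (X 0) _ hp) h2
      convert h using 1
      simp only [map_add, map_mul, map_pow, Polynomial.aeval_X]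
      ring
    · show ∃ a' b', p * X 1 - _ ∈ _
      refine ⟨0, 0, ?_⟩
      simp only [map_zero, mul_zero, add_zero, sub_zero]
      exact Ideal.mul_mem_left _ _ (Ideal.subset_span (by simp))
    · show ∃ a' b', p * X 2 - _ ∈ _
      refine ⟨Polynomial.X * a, Polynomial.X * b, ?_⟩
      have h := Ideal.mul_mem_right (X 2) _ hp
      convert h using 1
      simp only [map_mul, Polynomial.aeval_X]
      ring

lemma span_le_ker_phiB :
    Ideal.span {(X 2 : MvPolynomial (Fin 3) k) ^ 3 - X 0 ^ 2, X 1}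
      ≤ RingHom.ker (phiB k).toRingHom := by
  rw [Ideal.span_le]
  rintro d (rfl | rfl) <;> simp [RingHom.mem_ker, phiB] <;> ring

lemma parity_zero (a b : Polynomial k)
    (h : a.comp (Polynomial.X ^ 2) + Polynomial.X ^ 3 * b.comp (Polynomial.X ^ 2) = 0) :
    a = 0 ∧ b = 0 := by
  have hX2 : (Polynomial.X ^ 2 : Polynomial k) ≠ Polynomial.C ((Polynomial.X ^ 2 : Polynomial k).coeff 0) := by
    intro hc
    have := congrArg Polynomial.natDegree hc
    simp at this
  have hcz : ∀ p : Polynomial k, p ≠ 0 → p.comp (Polynomial.X ^ 2) ≠ 0 := by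
    intro p hp hc
    rcases Polynomial.comp_eq_zero_iff.mp hc with h1 | ⟨_, h2⟩
    · exact hp h1
    · exact hX2 h2
  by_cases ha : a = 0
  · subst ha
    simp only [Polynomial.zero_comp, zero_add] at h
    rcases mul_eq_zero.mp h with h1 | h2
    · exact absurd h1 (pow_ne_zero _ Polynomial.X_ne_zero)
    · by_cases hb : b = 0
      · exact ⟨rfl, hb⟩
      · exact absurd h2 (hcz b hb)
  · exfalso
    by_cases hb : b = 0
    · subst hb
      simp only [Polynomial.zero_comp, mul_zero, add_zero] at h
      exact hcz a ha h
    · have heq : a.comp (Polynomial.X ^ 2) = -(Polynomial.X ^ 3 * b.comp (Polynomial.X ^ 2)) := by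
        exact eq_neg_of_add_eq_zero_left h
      have h1 : (a.comp (Polynomial.X ^ 2)).natDegree = a.natDegree * 2 := by
        rw [Polynomial.natDegree_comp]; simp
      have h2 : (-(Polynomial.X ^ 3 * b.comp (Polynomial.X ^ 2))).natDegree = 3 + b.natDegree * 2 := by
        rw [Polynomial.natDegree_neg, Polynomial.natDegree_mul (pow_ne_zero _ Polynomial.X_ne_zero) (hcz b hb),
          Polynomial.natDegree_comp]
        simp
      rw [heq, h2] at h1
      omega

lemma mem_J2_iff (f : MvPolynomial (Fin 3) k) :
    f ∈ Ideal.span {(X 2 : MvPolynomial (Fin 3) k) ^ 3 - X 0 ^ 2, X 1} ↔ phiB k f = 0 := by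
  constructor
  · intro h; exact span_le_ker_phiB k h
  · intro h
    obtain ⟨a, b, hm⟩ := normal_form k f
    have h0 : phiB k (Polynomial.aeval (X 2 : MvPolynomial (Fin 3) k) a
        + X 0 * Polynomial.aeval (X 2 : MvPolynomial (Fin 3) k) b) = 0 := by
      have := span_le_ker_phiB k hm
      rw [RingHom.mem_ker] at this
      simp only [AlgHom.toRingHom_eq_coe, RingHom.coe_coe, map_sub] at this
      rw [h] at this
      rw [zero_sub, neg_eq_zero] at this; exact this
    have hphi : Polynomial.aeval ((Polynomial.X : Polynomial k) ^ 2) a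
        + Polynomial.X ^ 3 * Polynomial.aeval ((Polynomial.X : Polynomial k) ^ 2) b = 0 := by
      have e1 : phiB k (Polynomial.aeval (X 2 : MvPolynomial (Fin 3) k) a)
          = Polynomial.aeval ((Polynomial.X : Polynomial k) ^ 2) a := by
        rw [← Polynomial.aeval_algHom_apply]
        simp [phiB]
      have e2 : phiB k (Polynomial.aeval (X 2 : MvPolynomial (Fin 3) k) b)
          = Polynomial.aeval ((Polynomial.X : Polynomial k) ^ 2) b := by
        rw [← Polynomial.aeval_algHom_apply]
        simp [phiB]
      have := h0
      rw [map_add, map_mul, e1, e2] at this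
      simpa [phiB] using this
    rw [← Polynomial.comp_eq_aeval, ← Polynomial.comp_eq_aeval] at hphi
    obtain ⟨rfl, rfl⟩ := parity_zero k a b hphi
    simpa using hm

def minors2 {A : Type} [CommRing A] (M : Matrix (Fin 2) (Fin 3) A) : Ideal A :=
  Ideal.span {d : A | ∃ i j : Fin 3, d = M 0 i * M 1 j - M 0 j * M 1 i}

lemma main_unfolded (k : Type) [Field k] :
    (Ideal.span {(X 2 : MvPolynomial (Fin 3) k) ^ 3 - X 0 ^ 2, X 0 * X 1, X 1 * X 2}).IsRadical ∧
    Ideal.span {(X 2 : MvPolynomial (Fin 3) k) ^ 3 - X 0 ^ 2, X 0 * X 1, X 1 * X 2}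
      = Ideal.span {(X 0 : MvPolynomial (Fin 3) k), X 2}
        ⊓ Ideal.span {(X 2 : MvPolynomial (Fin 3) k) ^ 3 - X 0 ^ 2, X 1} ∧
    Ideal.span {(X 2 : MvPolynomial (Fin 3) k) ^ 3 - X 0 ^ 2, X 0 * X 1, X 1 * X 2}
      = minors2 !![(X 2 : MvPolynomial (Fin 3) k) ^ 2, X 0, X 1; X 0, X 2, 0] := by
  set R := MvPolynomial (Fin 3) k
  set I : Ideal R := Ideal.span {(X 2 : R) ^ 3 - X 0 ^ 2, X 0 * X 1, X 1 * X 2} with hI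
  set J1 : Ideal R := Ideal.span {(X 0 : R), X 2} with hJ1
  set J2 : Ideal R := Ideal.span {(X 2 : R) ^ 3 - X 0 ^ 2, X 1} with hJ2
  have hgI1 : (X 2 : R) ^ 3 - X 0 ^ 2 ∈ I := Ideal.subset_span (by simp)
  have hgI2 : (X 0 : R) * X 1 ∈ I := Ideal.subset_span (by simp)
  have hgI3 : (X 1 : R) * X 2 ∈ I := Ideal.subset_span (by simp)
  have hx : (X 0 : R) ∈ J1 := Ideal.subset_span (by simp)
  have hz : (X 2 : R) ∈ J1 := Ideal.subset_span (by simp)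
  have hgJ1 : (X 2 : R) ^ 3 - X 0 ^ 2 ∈ J1 := by
    have h1 : (X 2 : R) ^ 3 ∈ J1 := by
      have : (X 2 : R) ^ 3 = X 2 ^ 2 * X 2 := by ring
      rw [this]; exact Ideal.mul_mem_left _ _ hz
    have h2 : (X 0 : R) ^ 2 ∈ J1 := by
      have : (X 0 : R) ^ 2 = X 0 * X 0 := by ring
      rw [this]; exact Ideal.mul_mem_left _ _ hx
    exact Ideal.sub_mem _ h1 h2
  have heq : I = J1 ⊓ J2 := by
    apply le_antisymm
    · rw [hI, Ideal.span_le]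
      rintro d (rfl | rfl | rfl)
      · exact ⟨hgJ1, Ideal.subset_span (by simp)⟩
      · exact ⟨Ideal.mul_mem_right _ _ hx,
          Ideal.mul_mem_left _ _ (Ideal.subset_span (by simp))⟩
      · exact ⟨Ideal.mul_mem_left _ _ hz,
          Ideal.mul_mem_right _ _ (Ideal.subset_span (by simp))⟩
    · rintro f ⟨h1, h2⟩
      obtain ⟨a, b, hab⟩ := Ideal.mem_span_pair.mp h2
      have hby : b * X 1 ∈ J1 := by
        have : b * X 1 = f - a * ((X 2 : R) ^ 3 - X 0 ^ 2) := by rw [← hab]; ring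
        rw [this]
        exact Ideal.sub_mem _ h1 (Ideal.mul_mem_left _ _ hgJ1)
      have hb0 : psiA k b = 0 := by
        have h0 := (mem_J1_iff k _).mp hby
        rw [map_mul] at h0
        have hX1 : psiA k (X 1) = X 1 := by simp [psiA]
        rw [hX1] at h0
        rcases mul_eq_zero.mp h0 with h | h
        · exact h
        · exact absurd h (MvPolynomial.X_ne_zero 1)
      have hbJ1 : b ∈ J1 := (mem_J1_iff k b).mpr hb0
      obtain ⟨u, v, huv⟩ := Ideal.mem_span_pair.mp hbJ1
      have hf : f = a * ((X 2 : R) ^ 3 - X 0 ^ 2) + (u * (X 0 * X 1) + v * (X 1 * X 2)) := by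
        rw [← hab, ← huv]; ring
      rw [hf]
      exact Ideal.add_mem _ (Ideal.mul_mem_left _ _ hgI1)
        (Ideal.add_mem _ (Ideal.mul_mem_left _ _ hgI2) (Ideal.mul_mem_left _ _ hgI3))
  have hrad : I.IsRadical := by
    rintro f ⟨n, hfn⟩
    have hfn' : f ^ (n + 1) ∈ I := by
      rw [pow_succ]
      exact Ideal.mul_mem_right _ _ hfn
    rw [heq] at hfn' ⊢
    obtain ⟨hp1, hp2⟩ := hfn'
    constructor
    · apply (mem_J1_iff k f).mpr
      have := (mem_J1_iff k _).mp hp1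
      rw [map_pow] at this
      exact pow_eq_zero_iff (Nat.succ_ne_zero n) |>.mp this
    · apply (mem_J2_iff k f).mpr
      have := (mem_J2_iff k _).mp hp2
      rw [map_pow] at this
      exact pow_eq_zero_iff (Nat.succ_ne_zero n) |>.mp this
  refine ⟨hrad, heq, ?_⟩
  apply le_antisymm
  · rw [hI, Ideal.span_le]
    rintro d (rfl | rfl | rfl)
    · apply Ideal.subset_span
      refine ⟨0, 1, ?_⟩
      simp [Matrix.cons_val_one, Matrix.head_cons]
      try ring
    · apply Ideal.subset_span
      refine ⟨2, 0, ?_⟩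
      simp [Matrix.cons_val_one, Matrix.head_cons]
      try ring
    · apply Ideal.subset_span
      refine ⟨2, 1, ?_⟩
      simp [Matrix.cons_val_one, Matrix.head_cons]
      try ring
  · rw [minors2, Ideal.span_le]
    rintro d ⟨i, j, rfl⟩
    fin_cases i <;> fin_cases j <;> simp
    · have : (X 2 : R) ^ 2 * X 2 - X 0 * X 0 = X 2 ^ 3 - X 0 ^ 2 := by ring
      rw [this]; exact hgI1
    · have : (X 1 : R) * X 0 = X 0 * X 1 := by ring
      rw [this]; exact hgI2
    · have : (X 0 : R) * X 0 - X 2 ^ 2 * X 2 = -(X 2 ^ 3 - X 0 ^ 2) := by ring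
      rw [this]; exact neg_mem hgI1
    · exact hgI3
    · have : (X 1 : R) * X 0 = X 0 * X 1 := by ring
      rw [this]; exact hgI2
    · exact hgI3

/-- In `k[X,Y,Z]`, the ideal `I = (Z³ − X², XY, YZ)` is radical, and
`I = (X,Z) ∩ (Z³ − X², Y) = I₂([Z² X Y; X Z 0])`. -/
theorem ideal_radical_and_decomposition (k : Type) [Field k] :
    letI x : MvPolynomial (Fin 3) k := X 0
    letI y : MvPolynomial (Fin 3) k := X 1
    letI z : MvPolynomial (Fin 3) k := X 2
    letI I : Ideal (MvPolynomial (Fin 3) k) := Ideal.span {z ^ 3 - x ^ 2, x * y, y * z}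
    I.IsRadical ∧
    I = Ideal.span {x, z} ⊓ Ideal.span {z ^ 3 - x ^ 2, y} ∧
    I = minors2 !![z ^ 2, x, y; x, z, 0] := by
  exact main_unfolded k
end

section
/- In the polynomial ring k[X,Y,Z] over a field k, the equality of ideals (X,Y) ∩ (Y,Z) ∩ (Z,X) ∩ (X, Y+Z) = (XY, XZ, YZ(Y+Z)) holds, and this ideal is radical. -/
open MvPolynomial

namespace S19

variable {k : Type} [Field k]

lemma sub_aeval_mem (v : Fin 3 → MvPolynomial (Fin 3) k)
    (I : Ideal (MvPolynomial (Fin 3) k)) (hI : ∀ i, X i - v i ∈ I)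
    (f : MvPolynomial (Fin 3) k) : f - aeval v f ∈ I := by
  induction f using MvPolynomial.induction_on with
  | C a => simp
  | add p q hp hq =>
      have := I.add_mem hp hq
      simpa [sub_add_sub_comm] using this
  | mul_X p i hp =>
      have h : p * X i - aeval v (p * X i)
          = (p - aeval v p) * X i + aeval v p * (X i - v i) := by
        simp only [map_mul, aeval_X]; ring
      rw [h]
      exact I.add_mem (I.mul_mem_right _ hp) (I.mul_mem_left _ (hI i))

lemma span_eq_ker (v : Fin 3 → MvPolynomial (Fin 3) k) (s : Set (MvPolynomial (Fin 3) k))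
    (h1 : ∀ i, X i - v i ∈ Ideal.span s) (h2 : ∀ p ∈ s, aeval v p = 0) :
    Ideal.span s
      = RingHom.ker ((aeval v : MvPolynomial (Fin 3) k →ₐ[k] MvPolynomial (Fin 3) k)
          : MvPolynomial (Fin 3) k →+* MvPolynomial (Fin 3) k) := by
  apply le_antisymm
  · rw [Ideal.span_le]
    intro p hp
    simp only [SetLike.mem_coe, RingHom.mem_ker, AlgHom.coe_toRingHom]
    exact h2 p hp
  · intro f hf
    have h := sub_aeval_mem v (Ideal.span s) h1 f
    have hz : aeval v f = 0 := hf
    rwa [hz, sub_zero] at h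

lemma isPrime_of_ker (v : Fin 3 → MvPolynomial (Fin 3) k) (s : Set (MvPolynomial (Fin 3) k))
    (h1 : ∀ i, X i - v i ∈ Ideal.span s) (h2 : ∀ p ∈ s, aeval v p = 0) :
    (Ideal.span s).IsPrime := by
  rw [span_eq_ker v s h1 h2]
  exact RingHom.ker_isPrime _

lemma prime01 : (Ideal.span {(X 0 : MvPolynomial (Fin 3) k), X 1}).IsPrime := by
  apply isPrime_of_ker ![0, 0, X 2]
  · intro i
    fin_cases i <;> simp <;> exact Ideal.subset_span (by simp)
  · rintro p (rfl | rfl) <;> simp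

lemma prime12 : (Ideal.span {(X 1 : MvPolynomial (Fin 3) k), X 2}).IsPrime := by
  apply isPrime_of_ker ![X 0, 0, 0]
  · intro i
    fin_cases i <;> simp <;> exact Ideal.subset_span (by simp)
  · rintro p (rfl | rfl) <;> simp

lemma prime20 : (Ideal.span {(X 2 : MvPolynomial (Fin 3) k), X 0}).IsPrime := by
  apply isPrime_of_ker ![0, X 1, 0]
  · intro i
    fin_cases i <;> simp <;> exact Ideal.subset_span (by simp)
  · rintro p (rfl | rfl) <;> simp

lemma prime0s : (Ideal.span {(X 0 : MvPolynomial (Fin 3) k), X 1 + X 2}).IsPrime := by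
  apply isPrime_of_ker ![0, X 1, -(X 1)]
  · intro i
    fin_cases i <;> simp
    · exact Ideal.subset_span (by simp)
    · rw [add_comm]
      exact Ideal.subset_span (by simp)
  · rintro p (rfl | rfl) <;> simp

lemma prime_X1 : Prime (X 1 : MvPolynomial (Fin 3) k) := by
  rw [← Ideal.span_singleton_prime (X_ne_zero 1)]
  apply isPrime_of_ker ![X 0, 0, X 2]
  · intro i
    fin_cases i <;> simp
  · rintro p rfl; simp

lemma prime_X2 : Prime (X 2 : MvPolynomial (Fin 3) k) := by
  rw [← Ideal.span_singleton_prime (X_ne_zero 2)]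
  apply isPrime_of_ker ![X 0, X 1, 0]
  · intro i
    fin_cases i <;> simp
  · rintro p rfl; simp

lemma X12_ne_zero : (X 1 + X 2 : MvPolynomial (Fin 3) k) ≠ 0 := by
  intro h
  have := congrArg (aeval ![X 0, X 1, 0] : MvPolynomial (Fin 3) k →ₐ[k] MvPolynomial (Fin 3) k) h
  simp at this

lemma prime_X12 : Prime (X 1 + X 2 : MvPolynomial (Fin 3) k) := by
  rw [← Ideal.span_singleton_prime X12_ne_zero]
  apply isPrime_of_ker ![X 0, X 1, -(X 1)]
  · intro i
    fin_cases i <;> simp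
    rw [add_comm]
    exact Ideal.subset_span (by simp)
  · rintro p rfl; simp

lemma not_dvd_21 : ¬ (X 2 : MvPolynomial (Fin 3) k) ∣ X 1 := by
  rintro ⟨c, hc⟩
  have := congrArg (aeval ![X 0, X 1, 0] : MvPolynomial (Fin 3) k →ₐ[k] MvPolynomial (Fin 3) k) hc
  simp at this

lemma not_dvd_s1 : ¬ (X 1 + X 2 : MvPolynomial (Fin 3) k) ∣ X 1 := by
  rintro ⟨c, hc⟩
  have := congrArg
    (aeval ![X 0, X 1, -(X 1)] : MvPolynomial (Fin 3) k →ₐ[k] MvPolynomial (Fin 3) k) hc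
  simp at this

lemma not_dvd_s2 : ¬ (X 1 + X 2 : MvPolynomial (Fin 3) k) ∣ X 2 := by
  rintro ⟨c, hc⟩
  have := congrArg
    (aeval ![X 0, -(X 2), X 2] : MvPolynomial (Fin 3) k →ₐ[k] MvPolynomial (Fin 3) k) hc
  simp at this

lemma triple_dvd {α : Type*} [CommRing α] {p q r h : α} (hq : Prime q) (hr : Prime r)
    (hqp : ¬ q ∣ p) (hrp : ¬ r ∣ p) (hrq : ¬ r ∣ q)
    (h1 : p ∣ h) (h2 : q ∣ h) (h3 : r ∣ h) : p * q * r ∣ h := by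
  obtain ⟨a, rfl⟩ := h1
  have hqa : q ∣ a := ((hq.dvd_mul).mp h2).resolve_left hqp
  obtain ⟨b, rfl⟩ := hqa
  have hrb : r ∣ b := by
    rcases (hr.dvd_mul).mp h3 with h' | h'
    · exact absurd h' hrp
    · exact ((hr.dvd_mul).mp h').resolve_left hrq
  obtain ⟨c, rfl⟩ := hrb
  exact ⟨c, by ring⟩

lemma dvd_of_mem (v : Fin 3 → MvPolynomial (Fin 3) k) {f a b : MvPolynomial (Fin 3) k}
    (hf : f ∈ Ideal.span {a, b}) (ha : aeval v a = 0) :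
    aeval v b ∣ aeval v f := by
  have hm := Ideal.mem_map_of_mem
    (((aeval v : MvPolynomial (Fin 3) k →ₐ[k] MvPolynomial (Fin 3) k)) :
      MvPolynomial (Fin 3) k →+* MvPolynomial (Fin 3) k) hf
  rw [Ideal.map_span] at hm
  simp only [Set.image_insert_eq, Set.image_singleton, AlgHom.coe_toRingHom, ha] at hm
  obtain ⟨u, w, huw⟩ := Ideal.mem_span_pair.mp hm
  exact ⟨w, by rw [← huw]; ring⟩

end S19

/-- In `k[X,Y,Z]`,
`(X,Y) ∩ (Y,Z) ∩ (Z,X) ∩ (X, Y+Z) = (XY, XZ, YZ(Y+Z))`, and this ideal is radical. -/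
theorem intersection_eq_and_radical (k : Type) [Field k] :
    (Ideal.span {(X 0 : MvPolynomial (Fin 3) k), X 1} ⊓
        Ideal.span {(X 1 : MvPolynomial (Fin 3) k), X 2} ⊓
        Ideal.span {(X 2 : MvPolynomial (Fin 3) k), X 0} ⊓
        Ideal.span {(X 0 : MvPolynomial (Fin 3) k), X 1 + X 2}
      = Ideal.span {X 0 * X 1, X 0 * X 2, X 1 * X 2 * (X 1 + X 2)}) ∧
    (Ideal.span {(X 0 : MvPolynomial (Fin 3) k) * X 1, X 0 * X 2,
        X 1 * X 2 * (X 1 + X 2)}).IsRadical := by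
  have heq : Ideal.span {(X 0 : MvPolynomial (Fin 3) k), X 1} ⊓
        Ideal.span {(X 1 : MvPolynomial (Fin 3) k), X 2} ⊓
        Ideal.span {(X 2 : MvPolynomial (Fin 3) k), X 0} ⊓
        Ideal.span {(X 0 : MvPolynomial (Fin 3) k), X 1 + X 2}
      = Ideal.span {X 0 * X 1, X 0 * X 2, X 1 * X 2 * (X 1 + X 2)} := by
    apply le_antisymm
    · intro f hf
      simp only [Ideal.mem_inf] at hf
      obtain ⟨⟨⟨h01, h12⟩, h20⟩, h0s⟩ := hf
      set h : MvPolynomial (Fin 3) k := aeval ![0, X 1, X 2] f with hh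
      -- divisibility facts for h
      have hd1 : (X 1 : MvPolynomial (Fin 3) k) ∣ h := by
        simpa [hh] using S19.dvd_of_mem ![0, X 1, X 2] h01 (by simp)
      have hd2 : (X 2 : MvPolynomial (Fin 3) k) ∣ h := by
        rw [Set.pair_comm] at h20
        simpa [hh] using S19.dvd_of_mem ![0, X 1, X 2] h20 (by simp)
      have hds : (X 1 + X 2 : MvPolynomial (Fin 3) k) ∣ h := by
        simpa [hh] using S19.dvd_of_mem ![0, X 1, X 2] h0s (by simp)
      -- f - h = g * X 0
      have hsub : f - h ∈ Ideal.span {(X 0 : MvPolynomial (Fin 3) k)} := by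
        apply S19.sub_aeval_mem
        intro i
        fin_cases i <;> simp [Ideal.mem_span_singleton]
      obtain ⟨g, hg⟩ := Ideal.mem_span_singleton'.mp hsub
      -- evaluation killing X 1, X 2
      have hψf : aeval ![X 0, 0, 0] f = (0 : MvPolynomial (Fin 3) k) := by
        have := S19.dvd_of_mem ![X 0, 0, 0] h12 (by simp)
        simpa [zero_dvd_iff] using this
      have hψh : aeval ![(X 0 : MvPolynomial (Fin 3) k), 0, 0] h
          = C (constantCoeff f) := by
        rw [hh, comp_aeval_apply (f := ![0, X 1, X 2])
          (φ := (aeval ![(X 0 : MvPolynomial (Fin 3) k), 0, 0] :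
            MvPolynomial (Fin 3) k →ₐ[k] MvPolynomial (Fin 3) k))]
        have hfun : (fun i => (aeval ![(X 0 : MvPolynomial (Fin 3) k), 0, 0] :
              MvPolynomial (Fin 3) k →ₐ[k] MvPolynomial (Fin 3) k)
            ((![0, X 1, X 2] : Fin 3 → MvPolynomial (Fin 3) k) i))
            = (fun _ => (0 : MvPolynomial (Fin 3) k)) := by
          funext i; fin_cases i <;> simp
        rw [hfun, aeval_zero', algebraMap_eq]
      have e1 : aeval ![(X 0 : MvPolynomial (Fin 3) k), 0, 0] g * X 0
          = - C (constantCoeff f) := by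
        have := congrArg
          (aeval ![X 0, 0, 0] : MvPolynomial (Fin 3) k →ₐ[k] MvPolynomial (Fin 3) k) hg
        simp only [map_mul, map_sub, aeval_X, Matrix.cons_val_zero, hψf, hψh, zero_sub] at this
        exact this
      have hc : constantCoeff f = 0 := by
        have h2 := congrArg (constantCoeff : MvPolynomial (Fin 3) k →+* k) e1
        simpa using h2
      have hψg : aeval ![(X 0 : MvPolynomial (Fin 3) k), 0, 0] g = 0 := by
        have h0 : aeval ![(X 0 : MvPolynomial (Fin 3) k), 0, 0] g * X 0 = 0 := by
          rw [e1, hc]; simp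
        rcases mul_eq_zero.mp h0 with h' | h'
        · exact h'
        · exact absurd h' (X_ne_zero 0)
      have hgmem : g ∈ Ideal.span {(X 1 : MvPolynomial (Fin 3) k), X 2} := by
        have hm := S19.sub_aeval_mem ![X 0, 0, 0]
          (Ideal.span {(X 1 : MvPolynomial (Fin 3) k), X 2})
          (by intro i; fin_cases i <;> simp <;> exact Ideal.subset_span (by simp)) g
        rwa [hψg, sub_zero] at hm
      obtain ⟨a, b, hab⟩ := Ideal.mem_span_pair.mp hgmem
      have hfd : (X 1 * X 2 * (X 1 + X 2) : MvPolynomial (Fin 3) k) ∣ h :=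
        S19.triple_dvd S19.prime_X2 S19.prime_X12 S19.not_dvd_21 S19.not_dvd_s1
          S19.not_dvd_s2 hd1 hd2 hds
      obtain ⟨t, ht⟩ := hfd
      have hrepr : f = a * (X 0 * X 1) + b * (X 0 * X 2)
          + (X 1 * X 2 * (X 1 + X 2)) * t := by
        have hf2 : f = g * X 0 + h := by
          rw [hg]; ring
        rw [hf2, ← hab, ht]; ring
      rw [hrepr]
      refine Ideal.add_mem _ (Ideal.add_mem _ ?_ ?_) ?_
      · exact Ideal.mul_mem_left _ _ (Ideal.subset_span (by simp))
      · exact Ideal.mul_mem_left _ _ (Ideal.subset_span (by simp))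
      · exact Ideal.mul_mem_right _ _ (Ideal.subset_span (by simp))
    · rw [Ideal.span_le]
      rintro p hp
      simp only [Set.mem_insert_iff, Set.mem_singleton_iff] at hp
      have m01_0 : (X 0 : MvPolynomial (Fin 3) k) ∈ Ideal.span {(X 0 : MvPolynomial (Fin 3) k), X 1} :=
        Ideal.subset_span (Set.mem_insert _ _)
      have m01_1 : (X 1 : MvPolynomial (Fin 3) k) ∈ Ideal.span {(X 0 : MvPolynomial (Fin 3) k), X 1} :=
        Ideal.subset_span (Set.mem_insert_of_mem _ rfl)
      have m12_1 : (X 1 : MvPolynomial (Fin 3) k) ∈ Ideal.span {(X 1 : MvPolynomial (Fin 3) k), X 2} :=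
        Ideal.subset_span (Set.mem_insert _ _)
      have m12_2 : (X 2 : MvPolynomial (Fin 3) k) ∈ Ideal.span {(X 1 : MvPolynomial (Fin 3) k), X 2} :=
        Ideal.subset_span (Set.mem_insert_of_mem _ rfl)
      have m20_2 : (X 2 : MvPolynomial (Fin 3) k) ∈ Ideal.span {(X 2 : MvPolynomial (Fin 3) k), X 0} :=
        Ideal.subset_span (Set.mem_insert _ _)
      have m20_0 : (X 0 : MvPolynomial (Fin 3) k) ∈ Ideal.span {(X 2 : MvPolynomial (Fin 3) k), X 0} :=
        Ideal.subset_span (Set.mem_insert_of_mem _ rfl)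
      have m0s_0 : (X 0 : MvPolynomial (Fin 3) k) ∈ Ideal.span {(X 0 : MvPolynomial (Fin 3) k), X 1 + X 2} :=
        Ideal.subset_span (Set.mem_insert _ _)
      have m0s_s : (X 1 + X 2 : MvPolynomial (Fin 3) k) ∈ Ideal.span {(X 0 : MvPolynomial (Fin 3) k), X 1 + X 2} :=
        Ideal.subset_span (Set.mem_insert_of_mem _ rfl)
      rcases hp with rfl | rfl | rfl
      · exact ⟨⟨⟨Ideal.mul_mem_left _ _ m01_1, Ideal.mul_mem_left _ _ m12_1⟩,
          Ideal.mul_mem_right _ _ m20_0⟩, Ideal.mul_mem_right _ _ m0s_0⟩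
      · exact ⟨⟨⟨Ideal.mul_mem_right _ _ m01_0, Ideal.mul_mem_left _ _ m12_2⟩,
          Ideal.mul_mem_left _ _ m20_2⟩, Ideal.mul_mem_right _ _ m0s_0⟩
      · exact ⟨⟨⟨Ideal.mul_mem_right _ _ (Ideal.mul_mem_right _ _ m01_1),
          Ideal.mul_mem_right _ _ (Ideal.mul_mem_right _ _ m12_1)⟩,
          Ideal.mul_mem_right _ _ (Ideal.mul_mem_left _ _ m20_2)⟩,
          Ideal.mul_mem_left _ _ m0s_s⟩
  refine ⟨heq, ?_⟩
  rw [← heq]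
  exact ((S19.prime01.isRadical.inf S19.prime12.isRadical).inf
    S19.prime20.isRadical).inf S19.prime0s.isRadical
end
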